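/- arXiv:2406.13120 — 8 statements merged into one kernel-verified Lean document; each statement's English description precedes it below -/
import Mathlib

section
/- Let P be a nonzero Laurent polynomial with complex coefficients. Then the multiplication map V → V, w ↦ P·w, on the space V of doubly infinite formal series is surjective. -/
open LaurentPolynomial

/-- Multiplication of a doubly infinite formal series `w : ℤ → ℂ` by a Laurent
polynomial `P`, defined coefficientwise: `(P·w)_m = ∑_j P_j w_{m-j}`. -/
noncomputable def laurentMul (P : LaurentPolynomial ℂ) : (ℤ → ℂ) →ₗ[ℂ] (ℤ → ℂ) where
  toFun w m := ∑ j ∈ P.coeff.support, P.coeff j * w (m - j)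
  map_add' u v := by
    funext m
    simp [mul_add, Finset.sum_add_distrib]
  map_smul' c w := by
    funext m
    simp only [Pi.smul_apply, smul_eq_mul, RingHom.id_apply, Finset.mul_sum]
    exact Finset.sum_congr rfl fun j _ => by ring

/-!
A series whose support is bounded below is a Laurent series, and Laurent series form a field
(`HahnSeries.instField`), so it can be divided by `P`; dually, a series whose support is bounded
above is a Hahn series over `ℤᵒᵈ`, again a field. Every series is the sum of one of each kind,
and multiplication by `P` is linear.
-/

namespace HahnSeries

theorem ofFinsupp_eq_sum_single {Γ K : Type*} [PartialOrder Γ] [AddCommMonoid K] (c : Γ →₀ K) :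
    ofFinsupp c = ∑ j ∈ c.support, single j (c j) := by
  classical
  ext m
  simp only [coeff_ofFinsupp, coeff_sum, coeff_single]
  exact (Finsupp.sum_ite_self_eq c m).symm

variable {Γ K : Type*} [AddCommGroup Γ] [LinearOrder Γ] [IsOrderedAddMonoid Γ]

theorem coeff_ofFinsupp_mul [Semiring K] (c : Γ →₀ K) (x : K⟦Γ⟧) (m : Γ) :
    (ofFinsupp c * x).coeff m = ∑ j ∈ c.support, c j * x.coeff (m - j) := by
  simp only [ofFinsupp_eq_sum_single, Finset.sum_mul, coeff_sum, coeff_single_mul]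

theorem exists_sum_mul_sub_eq [Field K] {c : Γ →₀ K} (hc : c ≠ 0) {v : Γ → K}
    (hv : (Function.support v).IsPWO) :
    ∃ w : Γ → K, ∀ m, ∑ j ∈ c.support, c j * w (m - j) = v m := by
  have hc' : ofFinsupp c ≠ 0 := fun h => hc (Finsupp.ext fun m => by
    simpa using congrArg (coeff · m) h)
  refine ⟨((ofFinsupp c)⁻¹ * ⟨v, hv⟩).coeff, fun m => ?_⟩
  rw [← coeff_ofFinsupp_mul, ← mul_assoc, mul_inv_cancel₀ hc', one_mul]

end HahnSeries

theorem exists_laurentMul_eq_of_bddBelow {P : LaurentPolynomial ℂ} (hP : P ≠ 0) {v : ℤ → ℂ}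
    (hv : BddBelow (Function.support v)) :
    ∃ w, laurentMul P w = v := by
  obtain ⟨w, hw⟩ := HahnSeries.exists_sum_mul_sub_eq (AddMonoidAlgebra.coeff_eq_zero.not.mpr hP)
    hv.isWF.isPWO
  exact ⟨w, funext hw⟩

theorem exists_laurentMul_eq_of_bddAbove {P : LaurentPolynomial ℂ} (hP : P ≠ 0) {v : ℤ → ℂ}
    (hv : BddAbove (Function.support v)) :
    ∃ w, laurentMul P w = v := by
  -- `ℤᵒᵈ` is `ℤ` with the same subtraction, so a solution over `ℤᵒᵈ` is one over `ℤ`.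
  obtain ⟨w, hw⟩ := HahnSeries.exists_sum_mul_sub_eq (Γ := ℤᵒᵈ) (c := P.coeff)
    (AddMonoidAlgebra.coeff_eq_zero.not.mpr hP) hv.dual.isWF.isPWO
  exact ⟨w, funext hw⟩

/-- for a nonzero Laurent polynomial `P`, the multiplication map
`w ↦ P·w` on the space of doubly infinite formal series is surjective. -/
theorem laurentMul_surjective (P : LaurentPolynomial ℂ) (hP : P ≠ 0) :
    Function.Surjective (laurentMul P) := by
  intro v
  obtain ⟨w₁, h₁⟩ := exists_laurentMul_eq_of_bddBelow hP
    (bddBelow_Ici.mono (Set.support_indicator_subset (s := Set.Ici 0) (f := v)))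
  obtain ⟨w₂, h₂⟩ := exists_laurentMul_eq_of_bddAbove hP
    (bddAbove_Iio.mono (Set.support_indicator_subset (s := Set.Iio 0) (f := v)))
  refine ⟨w₁ + w₂, ?_⟩
  rw [map_add, h₁, h₂, ← Set.compl_Ici, Set.indicator_self_add_compl]
end

section
/- Let P be a nonzero Laurent polynomial with complex coefficients having exactly n nonzero roots counted with multiplicity. Then the kernel of the multiplication map V → V, w ↦ P·w, is a complex vector subspace of dimension n. -/
open LaurentPolynomial

/-!
Writing `Q = ∑ q_j X^j`, a series `w` is killed by `Q` iff `∑_{j ≤ n} q_j w(m - j) = 0` for all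
`m`. As `q_0 ≠ 0` and `q_n ≠ 0`, this relation can be solved both for its top and for its bottom
term, so restriction to `ℕ` identifies the kernel with the solution space of a linear recurrence of
order `n`, which has dimension `n`. Running the recurrence downwards is running the recurrence of
the reversed polynomial upwards; the factor `z^d` only shifts indices.
-/
open Finset

namespace Polynomial

section Semiring

variable {R : Type*} [CommSemiring R] (Q : R[X])

noncomputable def convolve : (ℤ → R) →ₗ[R] (ℤ → R) :=
  ∑ j ∈ range (Q.natDegree + 1), Q.coeff j • LinearMap.funLeft R R (· - (j : ℤ))

theorem convolve_apply (w : ℤ → R) (m : ℤ) :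
    Q.convolve w m = ∑ j ∈ range (Q.natDegree + 1), Q.coeff j * w (m - j) := by
  simp [convolve, LinearMap.funLeft]

variable {Q}

theorem convolve_apply_congr {u v : ℤ → R} {m : ℤ}
    (h : ∀ j ≤ Q.natDegree, u (m - j) = v (m - j)) : Q.convolve u m = Q.convolve v m := by
  simp only [convolve_apply]
  exact sum_congr rfl fun j hj => by rw [h j (mem_range_succ_iff.mp hj)]

theorem convolve_apply_add_natDegree (w : ℤ → R) (k : ℕ) :
    Q.convolve w (k + Q.natDegree) =
      ∑ i ∈ range Q.natDegree, Q.coeff (Q.natDegree - i) * w (k + i) +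
        Q.coeff 0 * w (k + Q.natDegree) := by
  rw [convolve_apply, ← sum_range_reflect, sum_range_succ]
  congr 1
  · refine sum_congr rfl fun i hi => ?_
    have hi : i < Q.natDegree := mem_range.mp hi
    rw [Nat.add_sub_cancel]
    congr 2
    omega
  · simp

theorem natDegree_reverse_of_coeff_zero_ne_zero (hQ : Q.coeff 0 ≠ 0) :
    Q.reverse.natDegree = Q.natDegree := by
  simp [reverse_natDegree, natTrailingDegree_eq_zero.mpr (Or.inr hQ)]

theorem coeff_zero_reverse_ne_zero (hQ : Q.coeff 0 ≠ 0) : Q.reverse.coeff 0 ≠ 0 := by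
  rw [coeff_zero_reverse, leadingCoeff_ne_zero]
  rintro rfl
  exact hQ (coeff_zero 0)

theorem convolve_reverse_apply (hQ : Q.coeff 0 ≠ 0) (u : ℤ → R) (c m : ℤ) :
    Q.reverse.convolve u m = Q.convolve (fun x => u (c - x)) (c + Q.natDegree - m) := by
  rw [convolve_apply, convolve_apply, natDegree_reverse_of_coeff_zero_ne_zero hQ,
    ← sum_range_reflect]
  refine sum_congr rfl fun j hj => ?_
  have hj : j ≤ Q.natDegree := mem_range_succ_iff.mp hj
  rw [coeff_reverse, revAt_le (by omega), Nat.add_sub_cancel, Nat.sub_sub_self hj]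
  congr 2
  push_cast [hj]
  ring

theorem convolve_piecewise_eq_zero {u v : ℤ → R}
    (hu : ∀ k : ℕ, Q.convolve u (k + Q.natDegree) = 0)
    (hv : ∀ k : ℕ, Q.convolve v (Q.natDegree - 1 - k) = 0)
    (huv : ∀ i < Q.natDegree, u i = v i) :
    Q.convolve (fun m => if 0 ≤ m then u m else v m) = 0 := by
  funext m
  rcases lt_or_ge m Q.natDegree with hm | hm
  · obtain ⟨k, rfl⟩ : ∃ k : ℕ, m = Q.natDegree - 1 - k := ⟨(Q.natDegree - 1 - m).toNat, by omega⟩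
    rw [convolve_apply_congr (v := v), hv k, Pi.zero_apply]
    intro j _
    split_ifs with h0
    · obtain ⟨i, hi⟩ := Int.eq_ofNat_of_zero_le h0
      rw [hi, huv i (by omega)]
    · rfl
  · obtain ⟨k, rfl⟩ : ∃ k : ℕ, m = k + Q.natDegree := ⟨(m - Q.natDegree).toNat, by omega⟩
    rw [convolve_apply_congr (v := u), hu k, Pi.zero_apply]
    intro j hj
    rw [if_pos (by omega)]

end Semiring

section Field

variable {K : Type*} [Field K] {Q : K[X]}

variable (Q) in
/-- The relation `∑_{j ≤ n} q_j w(k + n - j) = 0` solved for its top term `w(k + n)`. -/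
noncomputable def recurrence : LinearRecurrence K :=
  ⟨Q.natDegree, fun i => -Q.coeff (Q.natDegree - i) / Q.coeff 0⟩

theorem isSolution_recurrence_iff (hQ : Q.coeff 0 ≠ 0) (w : ℤ → K) :
    Q.recurrence.IsSolution (fun k : ℕ => w k) ↔
      ∀ k : ℕ, Q.convolve w (k + Q.natDegree) = 0 := by
  refine forall_congr' fun k => ?_
  rw [convolve_apply_add_natDegree]
  change w (k + Q.natDegree : ℕ) =
    ∑ i : Fin Q.natDegree, -Q.coeff (Q.natDegree - i) / Q.coeff 0 * w (k + i : ℕ) ↔ _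
  rw [Fin.sum_univ_eq_sum_range (fun i => -Q.coeff (Q.natDegree - i) / Q.coeff 0 * w (k + i : ℕ))]
  simp only [div_mul_eq_mul_div, neg_mul, ← sum_div, sum_neg_distrib, Nat.cast_add]
  rw [eq_div_iff hQ]
  constructor <;> intro h <;> linear_combination h

theorem apply_natCast_eq_zero_of_convolve_eq_zero (hQ : Q.coeff 0 ≠ 0) {w : ℤ → K}
    (hw : Q.convolve w = 0) (h : ∀ i < Q.natDegree, w i = 0) (k : ℕ) : w k = 0 := by
  have hsol := (isSolution_recurrence_iff hQ w).mpr fun k => by rw [hw, Pi.zero_apply]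
  have hzero := (Q.recurrence.eq_iff_eqOn_range_order _ 0 hsol Q.recurrence.solSpace.zero_mem).mpr
    fun i hi => h i (mem_range.mp hi)
  exact congrFun hzero k

theorem exists_convolve_add_natDegree_eq_zero (hQ : Q.coeff 0 ≠ 0) (y : ℤ → K) :
    ∃ u : ℤ → K, (∀ i < Q.natDegree, u i = y i) ∧
      ∀ k : ℕ, Q.convolve u (k + Q.natDegree) = 0 := by
  refine ⟨fun m => Q.recurrence.mkSol (fun i => y i) m.toNat,
    fun i hi => Q.recurrence.mkSol_eq_init _ ⟨i, hi⟩, ?_⟩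
  refine (isSolution_recurrence_iff hQ _).mp ?_
  simpa only [Int.toNat_natCast] using Q.recurrence.is_sol_mkSol _

theorem eq_zero_of_convolve_eq_zero_of_forall_natCast (hQ : Q.coeff 0 ≠ 0) {w : ℤ → K}
    (hw : Q.convolve w = 0) (h : ∀ k : ℕ, w k = 0) : w = 0 := by
  have hrev : Q.reverse.convolve (fun x => w (Q.natDegree - 1 - x)) = 0 := by
    funext m
    rw [convolve_reverse_apply hQ _ (Q.natDegree - 1)]
    simp only [sub_sub_cancel, hw, Pi.zero_apply]
  have hneg : ∀ k : ℕ, w (Q.natDegree - 1 - k) = 0 := by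
    refine apply_natCast_eq_zero_of_convolve_eq_zero (coeff_zero_reverse_ne_zero hQ) hrev
      fun i hi => ?_
    rw [natDegree_reverse_of_coeff_zero_ne_zero hQ] at hi
    rw [show (Q.natDegree : ℤ) - 1 - i = (Q.natDegree - 1 - i : ℕ) by omega]
    exact h _
  funext m
  rcases le_or_gt 0 m with hm | hm
  · obtain ⟨k, rfl⟩ := Int.eq_ofNat_of_zero_le hm
    exact h k
  · obtain ⟨k, rfl⟩ : ∃ k : ℕ, m = Q.natDegree - 1 - k := ⟨(Q.natDegree - 1 - m).toNat, by omega⟩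
    exact hneg k

theorem exists_convolve_eq_zero_of_isSolution (hQ : Q.coeff 0 ≠ 0) {a : ℕ → K}
    (ha : Q.recurrence.IsSolution a) : ∃ w : ℤ → K, Q.convolve w = 0 ∧ ∀ k : ℕ, w k = a k := by
  obtain ⟨u, hu_init, hu⟩ :=
    exists_convolve_add_natDegree_eq_zero (coeff_zero_reverse_ne_zero hQ)
      fun m => a (Q.natDegree - 1 - m).toNat
  rw [natDegree_reverse_of_coeff_zero_ne_zero hQ] at hu_init hu
  refine ⟨fun m => if 0 ≤ m then a m.toNat else u (Q.natDegree - 1 - m), ?_, fun k => by simp⟩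
  refine convolve_piecewise_eq_zero ((isSolution_recurrence_iff hQ _).mp (by simpa using ha))
    (fun k => ?_) fun i hi => ?_
  · rw [← hu k, convolve_reverse_apply hQ _ (Q.natDegree - 1), add_sub_add_right_eq_sub]
  · rw [show (Q.natDegree : ℤ) - 1 - i = (Q.natDegree - 1 - i : ℕ) by omega, hu_init _ (by omega)]
    congr
    omega

theorem rank_ker_convolve (hQ : Q.coeff 0 ≠ 0) :
    Module.rank K (LinearMap.ker Q.convolve) = Q.natDegree := by
  let restrict : LinearMap.ker Q.convolve →ₗ[K] Q.recurrence.solSpace :=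
    (LinearMap.funLeft K K ((↑) : ℕ → ℤ) ∘ₗ (LinearMap.ker Q.convolve).subtype).codRestrict _
      fun w => (isSolution_recurrence_iff hQ w).mpr fun k => by
        rw [LinearMap.mem_ker.mp w.2, Pi.zero_apply]
  have injective : Function.Injective restrict := by
    refine (injective_iff_map_eq_zero restrict).mpr fun w hw => Subtype.ext ?_
    exact eq_zero_of_convolve_eq_zero_of_forall_natCast hQ w.2 (congrFun (congrArg Subtype.val hw))
  have surjective : Function.Surjective restrict := fun a => by
    obtain ⟨w, hw, hwa⟩ := exists_convolve_eq_zero_of_isSolution hQ a.2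
    exact ⟨⟨w, hw⟩, by ext k; exact hwa k⟩
  rw [(LinearEquiv.ofBijective restrict ⟨injective, surjective⟩).rank_eq,
    LinearRecurrence.solSpace_rank]
  rfl

end Field

end Polynomial

theorem laurentMul_toLaurent (Q : Polynomial ℂ) : laurentMul Q.toLaurent = Q.convolve := by
  refine LinearMap.ext fun w => funext fun m => ?_
  rw [Polynomial.convolve_apply]
  change ∑ j ∈ Q.toLaurent.coeff.support, _ = _
  rw [support_coeff_toLaurent, sum_map]
  refine sum_subset_zero_on_sdiff Q.supp_subset_range_natDegree_succ (fun j hj => ?_) fun j _ => ?_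
  · rw [Polynomial.notMem_support_iff.mp (mem_sdiff.mp hj).2, zero_mul]
  · rw [coeff_toLaurent, Finsupp.mapDomain_apply Nat.castEmbedding.injective]
    rfl

theorem laurentMul_T_mul (d : ℤ) (A : LaurentPolynomial ℂ) :
    laurentMul (T d * A) = LinearMap.funLeft ℂ ℂ (· - d) ∘ₗ laurentMul A := by
  have hcoeff (j : ℤ) : (T d * A).coeff j = A.coeff (j - d) := by
    rw [T, AddMonoidAlgebra.coeff_single_mul_apply, one_mul, neg_add_eq_sub]
  have hsupp : (T d * A).coeff.support = A.coeff.support.map (addLeftEmbedding d) := by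
    ext j
    rw [mem_map, Finsupp.mem_support_iff, hcoeff]
    refine ⟨fun h => ⟨j - d, Finsupp.mem_support_iff.mpr h, add_sub_cancel d j⟩, ?_⟩
    rintro ⟨i, hi, rfl⟩
    rwa [addLeftEmbedding_apply, add_sub_cancel_left, ← Finsupp.mem_support_iff]
  refine LinearMap.ext fun w => funext fun m => ?_
  change ∑ j ∈ (T d * A).coeff.support, _ = ∑ j ∈ A.coeff.support, _
  rw [hsupp, sum_map]
  refine sum_congr rfl fun j _ => ?_
  simp only [addLeftEmbedding_apply, hcoeff, add_sub_cancel_left, sub_add_eq_sub_sub]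

theorem rank_ker_laurentMul_general (P : LaurentPolynomial ℂ) (n : ℕ)
    (d : ℤ) (Q : Polynomial ℂ) (hPQ : P = T d * Q.toLaurent)
    (hQ0 : Q.coeff 0 ≠ 0) (hdeg : Q.natDegree = n) :
    Module.rank ℂ (LinearMap.ker (laurentMul P)) = n := by
  have hshift : LinearMap.ker (LinearMap.funLeft ℂ ℂ (· - d)) = ⊥ :=
    LinearMap.ker_eq_bot.mpr <|
      LinearMap.funLeft_injective_of_surjective _ _ _ (Equiv.subRight d).surjective
  rw [hPQ, laurentMul_T_mul, LinearMap.ker_comp_of_ker_eq_bot _ hshift, laurentMul_toLaurent,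
    Polynomial.rank_ker_convolve hQ0, hdeg]

/-- if the nonzero Laurent polynomial `P` has exactly `n` nonzero
roots counted with multiplicity (i.e. `P = z^d · Q` with `Q(0) ≠ 0` and
`deg Q = n`), then the kernel of multiplication by `P` on the space of doubly
infinite formal series has dimension `n`. -/
theorem rank_ker_laurentMul (P : LaurentPolynomial ℂ) (hP : P ≠ 0) (n : ℕ)
    (d : ℤ) (Q : Polynomial ℂ) (hPQ : P = T d * Q.toLaurent)
    (hQ0 : Q.coeff 0 ≠ 0) (hdeg : Q.natDegree = n) :
    Module.rank ℂ (LinearMap.ker (laurentMul P)) = n :=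
  rank_ker_laurentMul_general P n d Q hPQ hQ0 hdeg
end

section
/- Let P be a nonzero Laurent polynomial with complex coefficients whose distinct nonzero roots are α_1, …, α_k with multiplicities m_1, …, m_k. Then the kernel of the multiplication map V → V, w ↦ P·w, is spanned (as a complex vector space) by the n = m_1 + ⋯ + m_k elements f_{i,j} for j = 1, …, k and i = 0, …, m_j − 1, and these elements are linearly independent. -/
/-! Multiplication by `T n` translates a series by `n`, so `P ↦ laurentMul P` is the algebra map
sending `T` to the shift `S w l = w (l - 1)`, and up to a unit `laurentMul P` is `Q(S)` for
`Q = ∏ (X - α_j)^{m_j}`. A solution of `w (l - 1) = a w l` is determined by `w 0`, so every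
`ker (S - a)` has dimension at most one, and peeling off linear factors gives
`dim ker Q(S) ≤ deg Q = n`. On the other hand `f_{i,α} l = descPochhammer i (l) · α^{-l}` and
`(S - α) f_{i+1,α} = -(i+1) S f_{i,α}`, so `f_{i,α}` is a generalized eigenvector of `S` for `α`
of order `i + 1`, hence lies in `ker Q(S)`. For fixed `α` these series are independent because the
Pochhammer polynomials have distinct degrees, and generalized eigenspaces for distinct eigenvalues
are independent; so the `n` series are independent and therefore span the kernel. -/

open LaurentPolynomial

/-- The doubly infinite series `f_{i,α} = ∑_{l ∈ ℤ} l(l-1)⋯(l-i+1) α^{-l} z^l`,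
whose `l`-th coefficient is the falling factorial with `i` factors times `α^{-l}`. -/
noncomputable def fSeries (i : ℕ) (α : ℂ) : ℤ → ℂ :=
  fun l => (∏ t ∈ Finset.range i, ((l : ℂ) - t)) * α ^ (-l)

open Polynomial Module LinearMap

namespace Module.End

variable {K V : Type*} [Field K] [AddCommGroup V] [Module K V]

lemma rank_ker_mul_le (f g : End K V) :
    Module.rank K (ker (f * g)) ≤ Module.rank K (ker f) + Module.rank K (ker g) := by
  let h : ker (f * g) →ₗ[K] ker f := g.restrict fun _ hx => hx
  have hker : Module.rank K (ker h) ≤ Module.rank K (ker g) :=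
    rank_le_of_injective (codRestrict (ker g) ((ker (f * g)).subtype ∘ₗ (ker h).subtype)
      fun x => congrArg Subtype.val x.2)
      fun _ _ hxy => Subtype.ext <| Subtype.ext <| congrArg (fun z : ker g => (z : V)) hxy
  rw [← h.rank_range_add_rank_ker]
  exact add_le_add (Submodule.rank_le _) hker

lemma rank_ker_aeval_le_natDegree [IsAlgClosed K] (f : End K V)
    (hf : ∀ a : K, Module.rank K (ker (f - algebraMap K _ a)) ≤ 1) {p : K[X]} (hp : p ≠ 0) :
    Module.rank K (ker (aeval f p)) ≤ p.natDegree := by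
  induction hn : p.natDegree generalizing p with
  | zero =>
    rw [eq_C_of_natDegree_eq_zero hn, aeval_C, Algebra.algebraMap_eq_smul_one,
      ker_smul _ _ (by simpa [← hn] using hp), one_eq_id, ker_id]
    simp
  | succ n ih =>
    obtain ⟨a, ha⟩ := IsAlgClosed.exists_root p
      (by rw [degree_eq_natDegree hp, hn]; exact_mod_cast n.succ_ne_zero)
    rw [← mul_divByMonic_eq_iff_isRoot.2 ha] at hp ⊢
    rw [map_mul, map_sub, aeval_X, aeval_C]
    have hq : p /ₘ (X - Polynomial.C a) ≠ 0 := right_ne_zero_of_mul hp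
    have hqdeg : (p /ₘ (X - Polynomial.C a)).natDegree = n := by
      rw [natDegree_divByMonic _ (monic_X_sub_C a), hn, natDegree_X_sub_C]
      rfl
    calc Module.rank K (ker ((f - algebraMap K _ a) * aeval f (p /ₘ (X - Polynomial.C a))))
        ≤ 1 + n := (rank_ker_mul_le _ _).trans (add_le_add (hf a) (ih hq hqdeg))
      _ = (n + 1 : ℕ) := by push_cast; rw [add_comm]

lemma genEigenspace_le_ker_aeval {R M : Type*} [CommRing R] [AddCommGroup M] [Module R M]
    (f : End R M) {μ : R} {k : ℕ} {p : R[X]} (hp : (X - Polynomial.C μ) ^ k ∣ p) :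
    f.genEigenspace μ k ≤ ker (aeval f p) := by
  obtain ⟨q, rfl⟩ := hp
  rw [genEigenspace_nat, mul_comm, map_mul, map_pow, map_sub, aeval_X, aeval_C,
    Algebra.algebraMap_eq_smul_one, mul_eq_comp]
  exact ker_le_ker_comp _ _

end Module.End

lemma linearIndependent_sigma_of_iSupIndep {R M η : Type*} {ιs : η → Type*} [Ring R]
    [AddCommGroup M] [Module R M] {p : η → Submodule R M} (hp : iSupIndep p)
    {v : ∀ j, ιs j → M} (hv : ∀ j, LinearIndependent R (v j)) (hvp : ∀ j i, v j i ∈ p j) :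
    LinearIndependent R fun ji : Σ j, ιs j => v ji.1 ji.2 := by
  refine linearIndependent_iUnion_finite hv fun j t _ hj => (hp j).mono ?_ ?_
  · exact Submodule.span_le.2 (Set.range_subset_iff.2 (hvp j))
  · refine iSup₂_mono' fun j' hj' => ⟨j', fun h => hj (h ▸ hj'), ?_⟩
    exact Submodule.span_le.2 (Set.range_subset_iff.2 (hvp j'))

lemma LinearIndependent.span_eq_of_rank_le {K V ι : Type*} [Field K] [AddCommGroup V]
    [Module K V] [Fintype ι] {v : ι → V} (hv : LinearIndependent K v) {W : Submodule K V}
    (hvW : ∀ i, v i ∈ W) (hW : Module.rank K W ≤ Fintype.card ι) :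
    Submodule.span K (Set.range v) = W := by
  have : FiniteDimensional K W :=
    Module.rank_lt_aleph0_iff.1 (hW.trans_lt Cardinal.natCast_lt_aleph0)
  refine Submodule.eq_of_le_of_finrank_le (Submodule.span_le.2 (Set.range_subset_iff.2 hvW)) ?_
  rw [finrank_span_eq_card hv]
  exact Module.finrank_le_of_rank_le hW

def translationHom {R G : Type*} [CommSemiring R] [AddCommGroup G] :
    Multiplicative G →* End R (G → R) where
  toFun n := funLeft R R (· - n.toAdd)
  map_one' := LinearMap.ext fun w => funext fun x => by simp [funLeft]
  map_mul' a b := LinearMap.ext fun w => funext fun x => by simp [funLeft, sub_sub]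

noncomputable def laurentMulAlgHom : ℂ[T;T⁻¹] →ₐ[ℂ] End ℂ (ℤ → ℂ) :=
  AddMonoidAlgebra.lift ℂ _ ℤ translationHom

lemma laurentMulAlgHom_apply (P : ℂ[T;T⁻¹]) : laurentMulAlgHom P = laurentMul P := by
  refine LinearMap.ext fun w => funext fun m => ?_
  simp [laurentMulAlgHom, AddMonoidAlgebra.lift_apply, Finsupp.sum, laurentMul, translationHom,
    funLeft]

lemma ker_laurentMul_unit_mul {u : ℂ[T;T⁻¹]} (hu : IsUnit u) (P : ℂ[T;T⁻¹]) :
    ker (laurentMul (u * P)) = ker (laurentMul P) := by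
  have hinj := ((End.isUnit_iff _).1 (hu.map laurentMulAlgHom)).1
  rw [← laurentMulAlgHom_apply, ← laurentMulAlgHom_apply P, map_mul, End.mul_eq_comp]
  exact ker_comp_of_ker_eq_bot _ (ker_eq_bot_of_injective hinj)

def seriesShift : End ℂ (ℤ → ℂ) := translationHom (Multiplicative.ofAdd 1)

lemma seriesShift_apply (w : ℤ → ℂ) (l : ℤ) : seriesShift w l = w (l - 1) := rfl

lemma laurentMul_toLaurent_s2 (p : ℂ[X]) : laurentMul (toLaurent p) = aeval seriesShift p := by
  have hX : (laurentMulAlgHom.comp toLaurentAlg) X = seriesShift := by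
    rw [AlgHom.comp_apply, toLaurentAlg_apply, toLaurent_X, T, laurentMulAlgHom,
      AddMonoidAlgebra.lift_single, one_smul]
    rfl
  rw [← hX, aeval_algHom_apply, aeval_X_left_apply]
  exact (laurentMulAlgHom_apply _).symm

lemma rank_ker_seriesShift_sub_le_one (a : ℂ) :
    Module.rank ℂ (ker (seriesShift - algebraMap ℂ _ a)) ≤ 1 := by
  let eval₀ : ker (seriesShift - algebraMap ℂ _ a) →ₗ[ℂ] ℂ := proj 0 ∘ₗ Submodule.subtype _
  refine (rank_le_of_injective eval₀ ?_).trans_eq (Module.rank_self ℂ)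
  rw [← ker_eq_bot, Submodule.eq_bot_iff]
  rintro ⟨w, hw⟩ (hw0 : w 0 = 0)
  have hrec (l : ℤ) : w (l - 1) = a * w l := by
    simpa [sub_eq_zero, seriesShift_apply] using congrFun hw l
  suffices w = 0 by simp [this]
  ext l
  rcases eq_or_ne a 0 with rfl | ha
  · simpa using hrec (l + 1)
  induction l using Int.induction_on with
  | zero => exact hw0
  | succ i ih => simpa [ih, ha] using (hrec (i + 1)).symm
  | pred i ih => simpa [ih] using hrec (-i)

def expPolySeries {K : Type*} [Field K] (α : K) : K[X] →ₗ[K] (ℤ → K) where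
  toFun p l := p.eval (l : K) * α ^ (-l)
  map_add' p q := funext fun l => by simp [add_mul]
  map_smul' c p := funext fun l => by simp [mul_assoc]

lemma expPolySeries_injective {K : Type*} [Field K] [CharZero K] {α : K} (hα : α ≠ 0) :
    Function.Injective (expPolySeries α) := by
  rw [← ker_eq_bot, Submodule.eq_bot_iff]
  intro p hp
  refine p.eq_zero_of_infinite_isRoot
    ((Set.infinite_range_of_injective Int.cast_injective).mono ?_)
  rintro _ ⟨l, rfl⟩
  exact (mul_eq_zero.1 (congrFun hp l)).resolve_right (zpow_ne_zero _ hα)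

lemma descPochhammer_eval_sub_one_succ {R : Type*} [CommRing R] (i : ℕ) (x : R) :
    (descPochhammer R (i + 1)).eval (x - 1)
      = (descPochhammer R (i + 1)).eval x - (i + 1) * (descPochhammer R i).eval (x - 1) := by
  simpa using congrArg (eval x) (descPochhammer_succ_comp_X_sub_one (R := R) i)

lemma fSeries_eq_expPolySeries (i : ℕ) (α : ℂ) :
    fSeries i α = expPolySeries α (descPochhammer ℂ i) := by
  ext l
  simp [fSeries, expPolySeries, descPochhammer_eval_eq_prod_range]

lemma linearIndependent_fSeries {α : ℂ} (hα : α ≠ 0) :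
    LinearIndependent ℂ fun i => fSeries i α := by
  let S : Polynomial.Sequence ℂ := ⟨descPochhammer ℂ, fun i => by
    rw [degree_eq_natDegree (monic_descPochhammer ℂ i).ne_zero, descPochhammer_natDegree]⟩
  have hS : (fun i => fSeries i α) = expPolySeries α ∘ S :=
    funext fun i => fSeries_eq_expPolySeries i α
  rw [hS]
  exact S.linearIndependent.map' _ (ker_eq_bot_of_injective (expPolySeries_injective hα))

lemma seriesShift_sub_smul_fSeries_zero {α : ℂ} (hα : α ≠ 0) :
    (seriesShift - α • 1) (fSeries 0 α) = 0 := by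
  ext l
  simp [fSeries, seriesShift_apply, zpow_sub₀ hα, div_eq_mul_inv]

lemma seriesShift_sub_smul_fSeries_succ {α : ℂ} (hα : α ≠ 0) (i : ℕ) :
    (seriesShift - α • 1) (fSeries (i + 1) α) = -(i + 1 : ℂ) • seriesShift (fSeries i α) := by
  ext l
  simp only [fSeries_eq_expPolySeries, expPolySeries, LinearMap.sub_apply, LinearMap.smul_apply,
    seriesShift_apply, End.one_apply, LinearMap.coe_mk, AddHom.coe_mk, Pi.sub_apply,
    Pi.smul_apply, smul_eq_mul, Int.cast_sub, Int.cast_one, descPochhammer_eval_sub_one_succ]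
  rw [zpow_neg, zpow_neg, zpow_sub₀ hα, zpow_one]
  field_simp
  ring

lemma fSeries_mem_genEigenspace {α : ℂ} (hα : α ≠ 0) (i : ℕ) :
    fSeries i α ∈ seriesShift.genEigenspace α (i + 1 : ℕ) := by
  induction i with
  | zero =>
    rw [End.mem_genEigenspace_nat, mem_ker, pow_one]
    exact seriesShift_sub_smul_fSeries_zero hα
  | succ i ih =>
    have hS := End.mapsTo_genEigenspace_of_comm (Commute.refl seriesShift) α _ ih
    have h := Submodule.smul_mem _ (-(i + 1 : ℂ)) hS
    rw [← seriesShift_sub_smul_fSeries_succ hα, End.mem_genEigenspace_nat, mem_ker] at h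
    rw [End.mem_genEigenspace_nat, mem_ker, pow_succ, End.mul_apply]
    exact h

theorem ker_laurentMul_spanned_by_fSeries_general (P : LaurentPolynomial ℂ)
    (k : ℕ) (α : Fin k → ℂ) (m : Fin k → ℕ) (c : ℂ) (d : ℤ)
    (hc : c ≠ 0) (hα0 : ∀ j, α j ≠ 0) (hαinj : Function.Injective α)
    (hPfac : P = T d * Polynomial.toLaurent
      (Polynomial.C c * ∏ j, (Polynomial.X - Polynomial.C (α j)) ^ m j)) :
    LinearIndependent ℂ (fun p : Σ j : Fin k, Fin (m j) => fSeries p.2.val (α p.1)) ∧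
    Submodule.span ℂ
        (Set.range (fun p : Σ j : Fin k, Fin (m j) => fSeries p.2.val (α p.1)))
      = LinearMap.ker (laurentMul P) := by
  set Q : ℂ[X] := ∏ j, (X - Polynomial.C (α j)) ^ m j
  have hker : ker (laurentMul P) = ker (aeval seriesShift Q) := by
    rw [hPfac, map_mul, toLaurent_C, ← mul_assoc,
      ker_laurentMul_unit_mul ((isUnit_T d).mul ((Ne.isUnit hc).map _)), laurentMul_toLaurent_s2]
  have hmem (p : Σ j : Fin k, Fin (m j)) :
      fSeries p.2 (α p.1) ∈ seriesShift.genEigenspace (α p.1) (m p.1) :=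
    (seriesShift.genEigenspace _).monotone (by exact_mod_cast p.2.isLt)
      (fSeries_mem_genEigenspace (hα0 p.1) p.2)
  have hli : LinearIndependent ℂ fun p : Σ j : Fin k, Fin (m j) => fSeries p.2 (α p.1) :=
    linearIndependent_sigma_of_iSupIndep (v := fun j (i : Fin (m j)) => fSeries i (α j))
      (seriesShift.independent_maxGenEigenspace.comp hαinj)
      (fun j => (linearIndependent_fSeries (hα0 j)).comp _ Fin.val_injective)
      fun j i => seriesShift.genEigenspace_le_maximal _ _ (hmem ⟨j, i⟩)
  have hdvd (j : Fin k) : (X - Polynomial.C (α j)) ^ m j ∣ Q :=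
    Finset.dvd_prod_of_mem (fun j => (X - Polynomial.C (α j)) ^ m j) (Finset.mem_univ j)
  have hrank : Module.rank ℂ (ker (aeval seriesShift Q)) ≤ Fintype.card (Σ j, Fin (m j)) := by
    have hQ : Q ≠ 0 := Finset.prod_ne_zero_iff.2 fun j _ => pow_ne_zero _ (X_sub_C_ne_zero _)
    refine (seriesShift.rank_ker_aeval_le_natDegree rank_ker_seriesShift_sub_le_one hQ).trans_eq ?_
    rw [natDegree_prod_of_monic _ _ fun j _ => (monic_X_sub_C _).pow _]
    simp
  refine ⟨hli, (hli.span_eq_of_rank_le ?_ hrank).trans hker.symm⟩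
  exact fun p => seriesShift.genEigenspace_le_ker_aeval (hdvd p.1) (hmem p)

/-- if the nonzero Laurent polynomial `P` has distinct nonzero
roots `α_1, …, α_k` with multiplicities `m_1, …, m_k` (i.e. `P = z^d · c · ∏_j
(z - α_j)^{m_j}` with `c ≠ 0`), then the elements `f_{i,j}` (for `j = 1,…,k`,
`i = 0,…,m_j - 1`) are linearly independent and span the kernel of
multiplication by `P` on the space of doubly infinite formal series. -/
theorem ker_laurentMul_spanned_by_fSeries (P : LaurentPolynomial ℂ) (hP : P ≠ 0)
    (k : ℕ) (α : Fin k → ℂ) (m : Fin k → ℕ) (c : ℂ) (d : ℤ)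
    (hc : c ≠ 0) (hα0 : ∀ j, α j ≠ 0) (hαinj : Function.Injective α)
    (hm : ∀ j, 0 < m j)
    (hPfac : P = T d * Polynomial.toLaurent
      (Polynomial.C c * ∏ j, (Polynomial.X - Polynomial.C (α j)) ^ m j)) :
    LinearIndependent ℂ (fun p : Σ j : Fin k, Fin (m j) => fSeries p.2.val (α p.1)) ∧
    Submodule.span ℂ
        (Set.range (fun p : Σ j : Fin k, Fin (m j) => fSeries p.2.val (α p.1)))
      = LinearMap.ker (laurentMul P) :=
  ker_laurentMul_spanned_by_fSeries_general P k α m c d hc hα0 hαinj hPfac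
end

section
/- Let a be a nonzero complex number. Then the kernel of the multiplication map V → V, w ↦ (z−a)·w, is one-dimensional and is spanned by the series ∑_{i∈ℤ} a^{−i} z^i. -/
/-!
Multiplication by `z` shifts coefficients, so `w` lies in the kernel of `z - a` exactly when
`w (m - 1) = a * w m` for all `m`. Then `m ↦ a ^ m * w m` is `1`-periodic on `ℤ`, hence constant,
which forces `w = w 0 • (i ↦ a ^ (-i))`.
-/

open LaurentPolynomial

lemma laurentMul_apply (P : LaurentPolynomial ℂ) (w : ℤ → ℂ) (m : ℤ) :
    laurentMul P w m = P.coeff.sum fun j c => c * w (m - j) := rfl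

lemma laurentMul_sub (P Q : LaurentPolynomial ℂ) :
    laurentMul (P - Q) = laurentMul P - laurentMul Q := by
  ext w m
  simp only [LinearMap.sub_apply, Pi.sub_apply, laurentMul_apply, AddMonoidAlgebra.coeff_sub]
  exact Finsupp.sum_sub_index fun _ _ _ => sub_mul _ _ _

lemma laurentMul_T_apply (n : ℤ) (w : ℤ → ℂ) (m : ℤ) :
    laurentMul (T n) w m = w (m - n) := by
  rw [laurentMul_apply, T, AddMonoidAlgebra.coeff_single, Finsupp.sum_single_index] <;> simp

lemma laurentMul_C (a : ℂ) : laurentMul (C a) = a • LinearMap.id := by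
  ext w m
  rw [laurentMul_apply, ← single_eq_C, AddMonoidAlgebra.coeff_single,
    Finsupp.sum_single_index] <;> simp

lemma mem_ker_laurentMul_T_one_sub_C {a : ℂ} {w : ℤ → ℂ} :
    w ∈ LinearMap.ker (laurentMul (T 1 - C a)) ↔ ∀ m, w (m - 1) = a * w m := by
  simp [funext_iff, laurentMul_sub, laurentMul_T_apply, laurentMul_C, sub_eq_zero]

theorem eq_mul_zpow_neg_of_forall_sub_one_eq_mul {K : Type*} [Field K] {a : K} (ha : a ≠ 0)
    {f : ℤ → K} (hf : ∀ m, f (m - 1) = a * f m) (m : ℤ) : f m = f 0 * a ^ (-m) := by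
  have hper : Function.Periodic (fun n : ℤ => a ^ n * f n) 1 := fun n => by
    simp only [zpow_add_one₀ ha, mul_assoc, ← hf (n + 1), add_sub_cancel_right]
  have hconst : a ^ m * f m = f 0 := by simpa using hper.int_mul_eq m
  rw [← hconst, mul_comm (a ^ m), zpow_neg, mul_inv_cancel_right₀ (zpow_ne_zero m ha)]

lemma ker_laurentMul_T_one_sub_C {a : ℂ} (ha : a ≠ 0) :
    LinearMap.ker (laurentMul (T 1 - C a)) = Submodule.span ℂ {fun i : ℤ => a ^ (-i)} := by
  refine le_antisymm (fun w hw => ?_) ((Submodule.span_singleton_le_iff_mem _ _).2 ?_)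
  · rw [mem_ker_laurentMul_T_one_sub_C] at hw
    refine Submodule.mem_span_singleton.2 ⟨w 0, funext fun m => ?_⟩
    exact (eq_mul_zpow_neg_of_forall_sub_one_eq_mul ha hw m).symm
  · refine mem_ker_laurentMul_T_one_sub_C.2 fun m => ?_
    rw [neg_sub, sub_eq_add_neg, zpow_add₀ ha, zpow_one]

/-- for a nonzero complex number `a`, the kernel of multiplication
by `z - a` on the space of doubly infinite formal series is one-dimensional,
spanned by the series `∑_{i ∈ ℤ} a^{-i} z^i`. -/
theorem ker_laurentMul_linear (a : ℂ) (ha : a ≠ 0) :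
    LinearMap.ker (laurentMul (T 1 - C a)) =
        Submodule.span ℂ {fun i : ℤ => a ^ (-i)} ∧
    Module.rank ℂ (LinearMap.ker (laurentMul (T 1 - C a))) = 1 := by
  have hv : (fun i : ℤ => a ^ (-i)) ≠ 0 := fun h => by simpa using congrFun h 0
  refine ⟨ker_laurentMul_T_one_sub_C ha, ?_⟩
  rw [ker_laurentMul_T_one_sub_C ha, rank_span_set (LinearIndepOn.singleton hv),
    Cardinal.mk_singleton]
end

section
/- Let T be a ℂ-linear map from the algebra of Laurent polynomials ℂ[z,z⁻¹] to ℂ such that T(1) = 1 and T(R·ρ(R)) > 0 (in particular real) for every nonzero Laurent polynomial R. Then for every nonzero integer k one has |T(z^k)| < 1. -/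
/-!
Positivity on `R = 1 + c zᵏ` gives, with `t = tr(zᵏ)` and `s = tr(z⁻ᵏ)`,
`0 < 1 + |c|² + c t + c̄ s` for every `c : ℂ`. That this is real for `c = 1` and `c = i` forces
`s = t̄`, and the choice `c = -t̄` then leaves `0 < 1 - |t|²`.
-/

open LaurentPolynomial
open scoped ComplexOrder

/-- The antilinear conjugation `ρ` on `ℂ[z,z⁻¹]`, sending `∑ aᵢ zⁱ` to
`∑ conj(aᵢ) z⁻ⁱ`. -/
noncomputable def rho (P : LaurentPolynomial ℂ) : LaurentPolynomial ℂ :=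
  AddMonoidAlgebra.ofCoeff (Finsupp.equivMapDomain (Equiv.neg ℤ)
    (Finsupp.mapRange (starRingEnd ℂ) (map_zero _) P.coeff))

open ComplexConjugate

namespace Complex

theorem eq_conj_of_forall_im_mul_add_conj_mul_eq_zero {s t : ℂ}
    (h : ∀ c : ℂ, (c * t + conj c * s).im = 0) : s = conj t := by
  have h₁ := h 1
  have hI := h I
  simp only [add_im, mul_im, one_re, one_im, map_one, conj_I, I_re, I_im, neg_re, neg_im] at h₁ hI
  apply Complex.ext <;> simp only [conj_re, conj_im] <;> linarith

theorem norm_lt_one_of_forall_pos {s t : ℂ}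
    (h : ∀ c : ℂ, 0 < 1 + (normSq c : ℂ) + c * t + conj c * s) : ‖t‖ < 1 := by
  have hs : s = conj t := eq_conj_of_forall_im_mul_add_conj_mul_eq_zero fun c => by
    simpa using (lt_def.mp (h c)).2.symm
  have hre := (lt_def.mp (h (-conj t))).1
  simp only [hs, map_neg, conj_conj, normSq_neg, normSq_conj, neg_mul, mul_conj,
    ← normSq_eq_conj_mul_self, add_re, neg_re, one_re, ofReal_re, zero_re] at hre
  rw [← sq_lt_one_iff₀ (norm_nonneg t), ← normSq_eq_norm_sq]
  linarith

end Complex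

open Complex (normSq)

theorem rho_add (P Q : LaurentPolynomial ℂ) : rho (P + Q) = rho P + rho Q := by
  ext n
  simp [rho, AddMonoidAlgebra.coeff_add]

theorem rho_C_mul_T (a : ℂ) (n : ℤ) : rho (C a * T n) = C (conj a) * T (-n) := by
  rw [← single_eq_C_mul_T, ← single_eq_C_mul_T, rho, AddMonoidAlgebra.coeff_single,
    Finsupp.mapRange_single, Finsupp.equivMapDomain_single]
  rfl

theorem rho_one : rho 1 = 1 := by
  simpa using rho_C_mul_T 1 0

theorem one_add_C_mul_T_ne_zero {R : Type*} [Semiring R] [Nontrivial R] (c : R) {k : ℤ}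
    (hk : k ≠ 0) : (1 + C c * T k : R[T;T⁻¹]) ≠ 0 := by
  intro h
  have h₀ := congrArg (fun P : R[T;T⁻¹] => P.coeff 0) h
  simp [← single_eq_C_mul_T, AddMonoidAlgebra.coeff_add, Finsupp.single_eq_of_ne hk.symm] at h₀

theorem one_add_C_mul_T_mul_rho (c : ℂ) (k : ℤ) :
    (1 + C c * T k) * rho (1 + C c * T k)
      = 1 + C (normSq c : ℂ) + C c * T k + C (conj c) * T (-k) := by
  have hT : (T k * T (-k) : LaurentPolynomial ℂ) = 1 := by rw [← T_add, add_neg_cancel, T_zero]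
  rw [rho_add, rho_one, rho_C_mul_T, Complex.normSq_eq_conj_mul_self, map_mul]
  linear_combination C c * C (conj c) * hT

theorem LinearMap.map_C_mul {R M : Type*} [CommSemiring R] [AddCommMonoid M] [Module R M]
    (f : R[T;T⁻¹] →ₗ[R] M) (a : R) (P : R[T;T⁻¹]) : f (C a * P) = a • f P := by
  rw [C_eq_algebraMap, ← Algebra.smul_def, map_smul]

theorem map_one_add_C_mul_T_mul_rho (tr : LaurentPolynomial ℂ →ₗ[ℂ] ℂ) (h1 : tr 1 = 1)
    (c : ℂ) (k : ℤ) :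
    tr ((1 + C c * T k) * rho (1 + C c * T k))
      = 1 + (normSq c : ℂ) + c * tr (T k) + conj c * tr (T (-k)) := by
  have hC : tr (C (normSq c : ℂ)) = normSq c := by
    simpa [h1] using tr.map_C_mul (normSq c) 1
  rw [one_add_C_mul_T_mul_rho, map_add, map_add, map_add, hC, h1, tr.map_C_mul, tr.map_C_mul,
    smul_eq_mul, smul_eq_mul]

/-- if `tr : ℂ[z,z⁻¹] → ℂ` is linear with `tr 1 = 1` and
`tr(R·ρ(R)) > 0` (positive real, in the order of `ℂ`) for every nonzero
Laurent polynomial `R`, then `|tr(z^k)| < 1` for every nonzero integer `k`. -/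
theorem abs_trace_T_lt_one (tr : LaurentPolynomial ℂ →ₗ[ℂ] ℂ)
    (h1 : tr 1 = 1)
    (hpos : ∀ R : LaurentPolynomial ℂ, R ≠ 0 → 0 < tr (R * rho R))
    (k : ℤ) (hk : k ≠ 0) :
    ‖tr (T k)‖ < 1 :=
  Complex.norm_lt_one_of_forall_pos fun c =>
    map_one_add_C_mul_T_mul_rho tr h1 c k ▸ hpos _ (one_add_C_mul_T_ne_zero c hk)
end

section
/- Let 0 < q < 1, let l be an integer, let P be a nonzero Laurent polynomial with complex coefficients, and let T : ℂ[z,z⁻¹] → ℂ be ℂ-linear and satisfy T(P(qz)R(qz)) = T(z^l P(q^{−1}z)R(q^{−1}z)) for every Laurent polynomial R. Define w ∈ V by w_m = T(z^{−m}) for m ∈ ℤ. Then the formal series identity P(z)·w(q^{−1}z) = q^l · (z^l P(z))·w(qz) holds in V, where w(sz) denotes the series with m-th coefficient s^m w_m. -/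
open LaurentPolynomial

/-- The Laurent polynomial `P(sz)` obtained from `P` by substituting `z ↦ sz`. -/
noncomputable def lscale (s : ℂ) (P : LaurentPolynomial ℂ) : LaurentPolynomial ℂ :=
  ∑ j ∈ P.coeff.support, C (P.coeff j * s ^ j) * T j

/-- The series `w(sz)`, whose `m`-th coefficient is `s^m wₘ`. -/
noncomputable def vscale (s : ℂ) (w : ℤ → ℂ) : ℤ → ℂ :=
  fun m => s ^ m * w m

/-
Since `wₘ = tr(z^{-m})`, the coefficient `0` of `Q·w(s⁻¹z)` is `tr(Q(sz))`, and the coefficient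
`m` of any `Q·v` is the coefficient `0` of `(z^{-m}Q)·v`. Hence the `m`-th coefficients of the two
sides are `tr(P(qz)R(qz))` and `tr(z^l P(q⁻¹z)R(q⁻¹z))` with `R = z^{-m}`, equal by hypothesis.
-/
namespace LaurentPolynomial

variable {R : Type*} [Semiring R]

theorem coeff_mul_T (Q : R[T;T⁻¹]) (k j : ℤ) : (Q * T k).coeff j = Q.coeff (j - k) := by
  rw [T, AddMonoidAlgebra.coeff_mul_single_apply, mul_one, sub_eq_add_neg]

theorem sum_support_mul_T {M : Type*} [AddCommMonoid M] (Q : R[T;T⁻¹]) (k : ℤ)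
    (g : ℤ → R → M) :
    ∑ j ∈ (Q * T k).coeff.support, g j ((Q * T k).coeff j)
      = ∑ j ∈ Q.coeff.support, g (j + k) (Q.coeff j) := by
  refine Finset.sum_nbij' (· - k) (· + k) ?_ ?_ ?_ ?_ ?_ <;> intro j hj <;>
    simp_all [coeff_mul_T]

end LaurentPolynomial

open LaurentPolynomial

theorem laurentMul_mul_T_apply (Q : LaurentPolynomial ℂ) (k : ℤ) (v : ℤ → ℂ) (m : ℤ) :
    laurentMul (Q * T k) v m = laurentMul Q v (m - k) := by
  simp only [laurentMul, LinearMap.coe_mk, AddHom.coe_mk]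
  rw [sum_support_mul_T Q k fun j a => a * v (m - j)]
  simp only [sub_add_eq_sub_sub_swap]

theorem laurentMul_apply_eq_laurentMul_mul_T_apply_zero (Q : LaurentPolynomial ℂ)
    (v : ℤ → ℂ) (m : ℤ) : laurentMul Q v m = laurentMul (Q * T (-m)) v 0 := by
  rw [laurentMul_mul_T_apply, zero_sub, neg_neg]

theorem map_lscale (f : LaurentPolynomial ℂ →ₗ[ℂ] ℂ) (s : ℂ) (Q : LaurentPolynomial ℂ) :
    f (lscale s Q) = ∑ j ∈ Q.coeff.support, Q.coeff j * s ^ j * f (T j) := by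
  simp only [lscale, map_sum, C_eq_algebraMap, ← Algebra.smul_def, map_smul, smul_eq_mul]

noncomputable def traceSeries (f : LaurentPolynomial ℂ →ₗ[ℂ] ℂ) : ℤ → ℂ :=
  fun m => f (T (-m))

theorem map_lscale_eq_laurentMul_apply_zero (f : LaurentPolynomial ℂ →ₗ[ℂ] ℂ) (s : ℂ)
    (Q : LaurentPolynomial ℂ) :
    f (lscale s Q) = laurentMul Q (vscale s⁻¹ (traceSeries f)) 0 := by
  simp only [map_lscale, laurentMul, LinearMap.coe_mk, AddHom.coe_mk, vscale, traceSeries,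
    zero_sub, neg_neg, inv_zpow', mul_assoc]

theorem map_T_mul_lscale_eq_laurentMul_apply_zero (f : LaurentPolynomial ℂ →ₗ[ℂ] ℂ)
    {s : ℂ} (hs : s ≠ 0) (k : ℤ) (Q : LaurentPolynomial ℂ) :
    f (T k * lscale s Q) = s ^ (-k) * laurentMul (T k * Q) (vscale s⁻¹ (traceSeries f)) 0 := by
  have hsum := map_lscale (f ∘ₗ LinearMap.mulLeft ℂ (T k)) s Q
  simp only [LinearMap.comp_apply, LinearMap.mulLeft_apply, ← T_add] at hsum
  rw [hsum, T_mul k Q, laurentMul_mul_T_apply]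
  simp only [laurentMul, LinearMap.coe_mk, AddHom.coe_mk, vscale, traceSeries, Finset.mul_sum]
  refine Finset.sum_congr rfl fun j _ => ?_
  rw [inv_zpow', mul_left_comm, ← mul_assoc (s ^ (-k)), ← zpow_add₀ hs]
  ring_nf

theorem trace_series_functional_equation_general (q : ℝ) (hq0 : 0 < q)
    (l : ℤ) (P : LaurentPolynomial ℂ)
    (tr : LaurentPolynomial ℂ →ₗ[ℂ] ℂ)
    (htr : ∀ R : LaurentPolynomial ℂ,
      tr (lscale (q : ℂ) (P * R)) = tr (T l * lscale ((q : ℂ)⁻¹) (P * R)))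
    (w : ℤ → ℂ) (hw : ∀ m : ℤ, w m = tr (T (-m))) :
    laurentMul P (vscale ((q : ℂ)⁻¹) w)
      = ((q : ℂ) ^ l) • laurentMul (T l * P) (vscale (q : ℂ) w) := by
  obtain rfl : w = traceSeries tr := funext hw
  have hq_inv : (q : ℂ)⁻¹ ≠ 0 := inv_ne_zero (Complex.ofReal_ne_zero.mpr hq0.ne')
  funext m
  have key := htr (T (-m))
  simp only [map_lscale_eq_laurentMul_apply_zero,
    map_T_mul_lscale_eq_laurentMul_apply_zero _ hq_inv, inv_inv, inv_zpow, zpow_neg] at key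
  rw [Pi.smul_apply, smul_eq_mul, laurentMul_apply_eq_laurentMul_mul_T_apply_zero,
    laurentMul_apply_eq_laurentMul_mul_T_apply_zero (T l * P), key, mul_assoc]

/-- let `0 < q < 1`, `l ∈ ℤ`, `P` a nonzero Laurent polynomial, and
`tr : ℂ[z,z⁻¹] → ℂ` a linear map with `tr(P(qz)R(qz)) = tr(z^l P(q⁻¹z)R(q⁻¹z))`
for all Laurent polynomials `R`. If `w ∈ V` is defined by `wₘ = tr(z^{-m})`,
then `P(z)·w(q⁻¹z) = q^l·(z^l P(z))·w(qz)` holds in `V`. -/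
theorem trace_series_functional_equation (q : ℝ) (hq0 : 0 < q) (hq1 : q < 1)
    (l : ℤ) (P : LaurentPolynomial ℂ) (hP : P ≠ 0)
    (tr : LaurentPolynomial ℂ →ₗ[ℂ] ℂ)
    (htr : ∀ R : LaurentPolynomial ℂ,
      tr (lscale (q : ℂ) (P * R)) = tr (T l * lscale ((q : ℂ)⁻¹) (P * R)))
    (w : ℤ → ℂ) (hw : ∀ m : ℤ, w m = tr (T (-m))) :
    laurentMul P (vscale ((q : ℂ)⁻¹) w)
      = ((q : ℂ) ^ l) • laurentMul (T l * P) (vscale (q : ℂ) w) :=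
  trace_series_functional_equation_general q hq0 l P tr htr w hw
end

section
/- Let 0 < q < 1, let l be an integer, and let P be a nonzero Laurent polynomial with complex coefficients having no roots of absolute value q or q^{−1}. Let T : ℂ[z,z⁻¹] → ℂ be ℂ-linear with T(1) = 1, T(R·ρ(R)) > 0 for every nonzero Laurent polynomial R, and T(P(qz)R(qz)) = T(z^l P(q^{−1}z)R(q^{−1}z)) for every Laurent polynomial R. Then there exist a constant C > 0 and a real number κ with 0 < κ < 1 such that |T(z^N)| ≤ C·κ^{|N|} for every integer N. -/
open LaurentPolynomial
open scoped ComplexOrder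

/-- Evaluation of a Laurent polynomial at a point `z ∈ ℂ`. -/
noncomputable def leval (P : LaurentPolynomial ℂ) (z : ℂ) : ℂ :=
  ∑ j ∈ P.coeff.support, P.coeff j * z ^ j

open Filter ComplexConjugate

/-!
Write `m N = tr (T N)`. Positivity of `tr` on `(T N + C t) * ρ (T N + C t)` for `t = ±1, ±i`
bounds `m`. Taking `R = T k` in the functional equation gives
`q ^ k * tr (P(qz) * T k) = q ^ (-k) * tr (P(q⁻¹z) * T (k + l))`, so by boundedness
`k ↦ tr (P(q⁻¹z) * T (k + l))` is `O(q ^ (2k))` as `k → +∞`, and `k ↦ tr (P(qz) * T k)` is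
`O(q ^ (-2k))` as `k → -∞`.

Up to a power of `T`, `P(q⁻¹z)` is a polynomial whose roots lie off the unit circle. Peeling off
one linear factor `z - α` at a time reduces everything to: if `h` is bounded and
`h (k + 1) - α h k` decays exponentially as `k → +∞` with `|α| ≠ 1`, then so does `h`
(solve the recurrence forwards if `|α| > 1`, backwards if `|α| < 1`). The side `N → -∞` is the
same argument for the functional `tr ∘ invert` and the reflection of `P(qz)`.
-/

-- Asked for every `k : ℤ`; for bounded `f` it only has force as `k → +∞`.
def ExpDecayAtTop {E : Type*} [SeminormedAddCommGroup E] (f : ℤ → E) : Prop :=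
  ∃ C r : ℝ, 0 < r ∧ r < 1 ∧ ∀ k, ‖f k‖ ≤ C * r ^ k

lemma le_mul_zpow_of_le_mul_add {u : ℤ → ℝ} {M b E D r : ℝ} {s : ℤ} (hu : ∀ k, u k ≤ M)
    (hb₀ : 0 ≤ b) (hb₁ : b < 1) (hr : 0 < r) (hD₀ : 0 ≤ D)
    (hrec : ∀ k, u k ≤ b * u (k + s) + E * r ^ k)
    (hD : b * r ^ s * D + E ≤ D) (k : ℤ) : u k ≤ D * r ^ k := by
  have key : ∀ n : ℕ, ∀ k, u k ≤ b ^ n * M + D * r ^ k := by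
    intro n
    induction n with
    | zero =>
      intro k
      have : 0 ≤ D * r ^ k := by positivity
      simpa using (hu k).trans (le_add_of_nonneg_right this)
    | succ n ih =>
      intro k
      calc u k ≤ b * (b ^ n * M + D * r ^ (k + s)) + E * r ^ k :=
            (hrec k).trans (by gcongr; exact ih _)
        _ = b ^ (n + 1) * M + (b * r ^ s * D + E) * r ^ k := by
            rw [zpow_add₀ hr.ne', pow_succ]; ring
        _ ≤ b ^ (n + 1) * M + D * r ^ k := by gcongr
  have hlim : Tendsto (fun n : ℕ => b ^ n * M + D * r ^ k) atTop (nhds (D * r ^ k)) := by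
    simpa using ((tendsto_pow_atTop_nhds_zero_of_lt_one hb₀ hb₁).mul_const M).add_const _
  exact ge_of_tendsto' hlim (key · k)

section

variable {E : Type*} [SeminormedAddCommGroup E]

lemma nonneg_of_norm_le_mul_zpow {f : ℤ → E} {C r : ℝ} (h : ∀ k, ‖f k‖ ≤ C * r ^ k) : 0 ≤ C := by
  simpa using (norm_nonneg _).trans (h 0)

lemma ExpDecayAtTop.exists_base_gt {f : ℤ → E} (hf : ∃ M, ∀ k, ‖f k‖ ≤ M) (h : ExpDecayAtTop f)
    {ρ : ℝ} (hρ : ρ < 1) : ∃ C r : ℝ, ρ < r ∧ r < 1 ∧ ∀ k, ‖f k‖ ≤ C * r ^ k := by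
  obtain ⟨M, hM⟩ := hf
  obtain ⟨C, r, hr₀, hr₁, hC⟩ := h
  have hC₀ := nonneg_of_norm_le_mul_zpow hC
  set r' := max r ((ρ + 1) / 2)
  have hrr' : r ≤ r' := le_max_left _ _
  refine ⟨max C M, r', by grind, max_lt hr₁ (by linarith), fun k => ?_⟩
  rcases le_or_gt 0 k with hk | hk
  · calc ‖f k‖ ≤ C * r ^ k := hC k
      _ ≤ max C M * r' ^ k := by
          gcongr
          · exact le_max_left _ _
          · exact zpow_le_zpow_left₀ hk hr₀.le hrr'
  · calc ‖f k‖ ≤ max C M * 1 := by rw [mul_one]; exact (hM k).trans (le_max_right _ _)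
      _ ≤ max C M * r' ^ k := by
          gcongr
          exact one_le_zpow_of_nonpos₀ (hr₀.trans_le hrr') (max_lt hr₁ (by linarith)).le hk.le

end

section

variable {𝕜 E : Type*} [NormedField 𝕜] [SeminormedAddCommGroup E] [NormedSpace 𝕜 E]

lemma ExpDecayAtTop.of_sub_smul_of_one_lt {h : ℤ → E} {α : 𝕜} (hα : 1 < ‖α‖)
    (hh : ∃ M, ∀ k, ‖h k‖ ≤ M) (he : ExpDecayAtTop fun k => h (k + 1) - α • h k) :
    ExpDecayAtTop h := by
  obtain ⟨M, hM⟩ := hh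
  obtain ⟨C, r, hr₀, hr₁, hC⟩ := he
  have hC₀ := nonneg_of_norm_le_mul_zpow hC
  have ha : 0 < ‖α‖ := by linarith
  have hrec (k : ℤ) : ‖h k‖ ≤ ‖α‖⁻¹ * ‖h (k + 1)‖ + ‖α‖⁻¹ * C * r ^ k := by
    have : ‖α • h k‖ ≤ ‖h (k + 1)‖ + C * r ^ k := by
      rw [← sub_sub_cancel (h (k + 1)) (α • h k)]
      exact (norm_sub_le _ _).trans (by gcongr; exact hC k)
    rw [norm_smul] at this
    calc ‖h k‖ = ‖α‖⁻¹ * (‖α‖ * ‖h k‖) := by field_simp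
      _ ≤ ‖α‖⁻¹ * (‖h (k + 1)‖ + C * r ^ k) := by gcongr
      _ = _ := by ring
  refine ⟨C / (‖α‖ - r), r, hr₀, hr₁, le_mul_zpow_of_le_mul_add hM (by positivity)
    (inv_lt_one_of_one_lt₀ hα) hr₀ (div_nonneg hC₀ (by linarith)) hrec (le_of_eq ?_)⟩
  have : ‖α‖ - r ≠ 0 := by linarith
  rw [zpow_one]; field_simp; ring

lemma ExpDecayAtTop.of_sub_smul_of_lt_one {h : ℤ → E} {α : 𝕜} (hα : ‖α‖ < 1)
    (hh : ∃ M, ∀ k, ‖h k‖ ≤ M) (he : ExpDecayAtTop fun k => h (k + 1) - α • h k) :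
    ExpDecayAtTop h := by
  obtain ⟨M, hM⟩ := hh
  have he_bdd : ∃ M', ∀ k, ‖h (k + 1) - α • h k‖ ≤ M' :=
    ⟨M + ‖α‖ * M, fun k => (norm_sub_le _ _).trans (by rw [norm_smul]; gcongr <;> apply hM)⟩
  -- The backward recurrence needs a rate `r > ‖α‖`.
  obtain ⟨C, r, har, hr₁, hC⟩ := he.exists_base_gt he_bdd hα
  have hC₀ := nonneg_of_norm_le_mul_zpow hC
  have hr₀ : 0 < r := (norm_nonneg α).trans_lt har
  have hrec (k : ℤ) : ‖h k‖ ≤ ‖α‖ * ‖h (k + -1)‖ + C * r⁻¹ * r ^ k := by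
    have hk : h k = (h (k + -1 + 1) - α • h (k + -1)) + α • h (k + -1) := by simp
    calc ‖h k‖ ≤ C * r ^ (k + -1) + ‖α‖ * ‖h (k + -1)‖ := by
          rw [hk, ← norm_smul]; exact (norm_add_le _ _).trans (by gcongr; exact hC _)
      _ = _ := by rw [zpow_add₀ hr₀.ne', zpow_neg_one]; ring
  refine ⟨C / (r - ‖α‖), r, hr₀, hr₁, le_mul_zpow_of_le_mul_add hM (norm_nonneg α) hα hr₀
    (div_nonneg hC₀ (by linarith)) hrec (le_of_eq ?_)⟩
  have : r - ‖α‖ ≠ 0 := by linarith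
  rw [zpow_neg_one]; field_simp; ring

lemma ExpDecayAtTop.of_sub_smul {h : ℤ → E} {α : 𝕜} (hα : ‖α‖ ≠ 1)
    (hh : ∃ M, ∀ k, ‖h k‖ ≤ M) (he : ExpDecayAtTop fun k => h (k + 1) - α • h k) :
    ExpDecayAtTop h :=
  hα.lt_or_gt.elim (fun hlt => of_sub_smul_of_lt_one hlt hh he)
    (fun hgt => of_sub_smul_of_one_lt hgt hh he)

lemma ExpDecayAtTop.comp_add_right {f : ℤ → E} (h : ExpDecayAtTop f) (c : ℤ) :
    ExpDecayAtTop fun k => f (k + c) := by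
  obtain ⟨C, r, hr₀, hr₁, hC⟩ := h
  exact ⟨C * r ^ c, r, hr₀, hr₁, fun k => (hC _).trans_eq (by rw [zpow_add₀ hr₀.ne']; ring)⟩

lemma ExpDecayAtTop.const_smul {f : ℤ → E} (h : ExpDecayAtTop f) (a : 𝕜) :
    ExpDecayAtTop fun k => a • f k := by
  obtain ⟨C, r, hr₀, hr₁, hC⟩ := h
  exact ⟨‖a‖ * C, r, hr₀, hr₁, fun k => by rw [norm_smul, mul_assoc]; gcongr; exact hC k⟩

lemma expDecayAtTop_zpow_smul {ρ : 𝕜} (hρ₀ : ρ ≠ 0) (hρ₁ : ‖ρ‖ < 1) {g : ℤ → E}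
    (hg : ∃ M, ∀ k, ‖g k‖ ≤ M) : ExpDecayAtTop fun k => ρ ^ k • g k := by
  obtain ⟨M, hM⟩ := hg
  exact ⟨M, ‖ρ‖, norm_pos_iff.mpr hρ₀, hρ₁, fun k => by
    rw [norm_smul, norm_zpow, mul_comm]; gcongr; exact hM k⟩

end

lemma ExpDecayAtTop.exists_norm_le_mul_pow_natAbs {E : Type*} [SeminormedAddCommGroup E]
    {f : ℤ → E} (h₁ : ExpDecayAtTop f) (h₂ : ExpDecayAtTop fun k => f (-k)) :
    ∃ C : ℝ, 0 < C ∧ ∃ κ : ℝ, 0 < κ ∧ κ < 1 ∧ ∀ N : ℤ, ‖f N‖ ≤ C * κ ^ N.natAbs := by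
  obtain ⟨C₁, r₁, hr₁₀, hr₁₁, hC₁⟩ := h₁
  obtain ⟨C₂, r₂, hr₂₀, hr₂₁, hC₂⟩ := h₂
  refine ⟨max (max C₁ C₂) 1, by positivity, max r₁ r₂, lt_max_of_lt_left hr₁₀,
    max_lt hr₁₁ hr₂₁, fun N => ?_⟩
  rcases le_or_gt 0 N with hN | hN
  · calc ‖f N‖ ≤ C₁ * r₁ ^ N.natAbs := by
          simpa [← zpow_natCast, Int.natAbs_of_nonneg hN] using hC₁ N
      _ ≤ _ := by gcongr <;> simp
  · calc ‖f N‖ ≤ C₂ * r₂ ^ N.natAbs := by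
          simpa [← zpow_natCast, Int.ofNat_natAbs_of_nonpos hN.le] using hC₂ (-N)
      _ ≤ _ := by gcongr <;> simp

lemma leval_eq_sum (P : ℂ[T;T⁻¹]) (z : ℂ) : leval P z = P.coeff.sum fun j a => a * z ^ j := rfl

lemma leval_add (P Q : ℂ[T;T⁻¹]) (z : ℂ) : leval (P + Q) z = leval P z + leval Q z := by
  simp only [leval_eq_sum, AddMonoidAlgebra.coeff_add]
  exact Finsupp.sum_add_index' (fun _ => zero_mul _) (fun _ _ _ => add_mul _ _ _)

lemma leval_C_mul_T (a : ℂ) (n : ℤ) (z : ℂ) : leval (C a * T n) z = a * z ^ n := by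
  rw [leval_eq_sum, ← single_eq_C_mul_T, AddMonoidAlgebra.coeff_single,
    Finsupp.sum_single_index (zero_mul _)]

lemma leval_mul_T (P : ℂ[T;T⁻¹]) (n : ℤ) {z : ℂ} (hz : z ≠ 0) :
    leval (P * T n) z = leval P z * z ^ n := by
  induction P using LaurentPolynomial.induction_on' with
  | add P Q hP hQ => rw [add_mul, leval_add, leval_add, hP, hQ, add_mul]
  | C_mul_T m a => rw [mul_T_assoc, leval_C_mul_T, leval_C_mul_T, zpow_add₀ hz, mul_assoc]

lemma leval_toLaurent (p : Polynomial ℂ) (z : ℂ) : leval (Polynomial.toLaurent p) z = p.eval z := by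
  induction p using Polynomial.induction_on' with
  | add p q hp hq => rw [map_add, leval_add, hp, hq, Polynomial.eval_add]
  | monomial n a =>
    rw [Polynomial.toLaurent_C_mul_T, leval_C_mul_T, Polynomial.eval_monomial, zpow_natCast]

lemma leval_invert (P : ℂ[T;T⁻¹]) (z : ℂ) : leval (invert P) z = leval P z⁻¹ := by
  induction P using LaurentPolynomial.induction_on' with
  | add P Q hP hQ => rw [map_add, leval_add, leval_add, hP, hQ]
  | C_mul_T n a => rw [map_mul, invert_C, invert_T, leval_C_mul_T, leval_C_mul_T, inv_zpow']

lemma coeff_lscale (s : ℂ) (Q : ℂ[T;T⁻¹]) (j : ℤ) : (lscale s Q).coeff j = Q.coeff j * s ^ j := by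
  classical
  rw [lscale, AddMonoidAlgebra.coeff_sum, Finset.sum_apply']
  simp_rw [← single_eq_C_mul_T, AddMonoidAlgebra.coeff_single, Finsupp.single_apply]
  rw [Finset.sum_ite_eq']
  split_ifs with hj
  · rfl
  · rw [Finsupp.notMem_support_iff.mp hj, zero_mul]

lemma lscale_add (s : ℂ) (P Q : ℂ[T;T⁻¹]) : lscale s (P + Q) = lscale s P + lscale s Q := by
  ext j
  simp only [coeff_lscale, AddMonoidAlgebra.coeff_add, Finsupp.add_apply, add_mul]

lemma lscale_C_mul_T (s a : ℂ) (n : ℤ) : lscale s (C a * T n) = C (a * s ^ n) * T n := by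
  ext j
  simp only [coeff_lscale, ← single_eq_C_mul_T, AddMonoidAlgebra.coeff_single, Finsupp.single_apply]
  split_ifs with h
  · rw [h]
  · rw [zero_mul]

lemma lscale_mul_T {s : ℂ} (hs : s ≠ 0) (Q : ℂ[T;T⁻¹]) (k : ℤ) :
    lscale s (Q * T k) = C (s ^ k) * (lscale s Q * T k) := by
  induction Q using LaurentPolynomial.induction_on' with
  | add P Q hP hQ => rw [add_mul, lscale_add, hP, hQ, lscale_add, add_mul, mul_add]
  | C_mul_T n a =>
    rw [mul_T_assoc, lscale_C_mul_T, lscale_C_mul_T, mul_T_assoc, ← mul_assoc, ← map_mul,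
      zpow_add₀ hs]
    congr 2; ring

lemma leval_lscale (s : ℂ) (Q : ℂ[T;T⁻¹]) (z : ℂ) : leval (lscale s Q) z = leval Q (s * z) := by
  induction Q using LaurentPolynomial.induction_on' with
  | add P Q hP hQ => rw [lscale_add, leval_add, leval_add, hP, hQ]
  | C_mul_T n a => rw [lscale_C_mul_T, leval_C_mul_T, leval_C_mul_T, mul_zpow, mul_assoc]

section Functional

variable {𝕜 E : Type*} [NormedField 𝕜] [SeminormedAddCommGroup E] [NormedSpace 𝕜 E]

lemma LinearMap.exists_bound_apply_mul_T (φ : 𝕜[T;T⁻¹] →ₗ[𝕜] E) (hφ : ∃ M, ∀ n, ‖φ (T n)‖ ≤ M)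
    (Q : 𝕜[T;T⁻¹]) : ∃ M, ∀ k, ‖φ (Q * T k)‖ ≤ M := by
  obtain ⟨M, hM⟩ := hφ
  induction Q using LaurentPolynomial.induction_on' with
  | add P Q hP hQ =>
    obtain ⟨M₁, hM₁⟩ := hP
    obtain ⟨M₂, hM₂⟩ := hQ
    exact ⟨M₁ + M₂, fun k => by rw [add_mul, map_add]; exact norm_add_le_of_le (hM₁ k) (hM₂ k)⟩
  | C_mul_T n a =>
    exact ⟨‖a‖ * M, fun k => by
      rw [mul_T_assoc, ← smul_eq_C_mul, map_smul, norm_smul]; gcongr; exact hM _⟩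

lemma expDecayAtTop_of_apply_prod_mul_T (s : Multiset 𝕜) (hs : ∀ α ∈ s, ‖α‖ ≠ 1)
    (φ : 𝕜[T;T⁻¹] →ₗ[𝕜] E) (hφ : ∃ M, ∀ n, ‖φ (T n)‖ ≤ M)
    (h : ExpDecayAtTop fun k =>
      φ (Polynomial.toLaurent (s.map fun α => Polynomial.X - Polynomial.C α).prod * T k)) :
    ExpDecayAtTop fun k => φ (T k) := by
  induction s using Multiset.induction_on generalizing φ with
  | empty => simpa using h
  | cons α s ih =>
    have hψ (k : ℤ) : φ ((T 1 - C α) * T k) = φ (T (k + 1)) - α • φ (T k) := by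
      rw [sub_mul, ← T_add, add_comm, map_sub, ← smul_eq_C_mul, map_smul]
    refine .of_sub_smul (hs α (Multiset.mem_cons_self α s)) hφ ?_
    simp_rw [← hψ]
    refine ih (fun β hβ => hs β (Multiset.mem_cons_of_mem hβ)) (φ ∘ₗ .mulLeft 𝕜 (T 1 - C α))
      (φ.exists_bound_apply_mul_T hφ _) ?_
    simpa [mul_assoc] using h

end Functional

lemma expDecayAtTop_of_apply_toLaurent_mul_T {𝕜 E : Type*} [NormedField 𝕜] [IsAlgClosed 𝕜]
    [SeminormedAddCommGroup E] [NormedSpace 𝕜 E] {p : Polynomial 𝕜}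
    (hp : ∀ z : 𝕜, ‖z‖ = 1 → p.eval z ≠ 0) (φ : 𝕜[T;T⁻¹] →ₗ[𝕜] E)
    (hφ : ∃ M, ∀ n, ‖φ (T n)‖ ≤ M) (h : ExpDecayAtTop fun k => φ (Polynomial.toLaurent p * T k)) :
    ExpDecayAtTop fun k => φ (T k) := by
  have hp₀ : p ≠ 0 := fun h₀ => hp 1 norm_one (by rw [h₀, Polynomial.eval_zero])
  obtain ⟨c, hc, hfac⟩ : ∃ c ≠ 0,
      Polynomial.C c * (p.roots.map fun α => Polynomial.X - Polynomial.C α).prod = p :=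
    ⟨_, Polynomial.leadingCoeff_ne_zero.mpr hp₀,
      Polynomial.C_leadingCoeff_mul_prod_multiset_X_sub_C IsAlgClosed.card_roots_eq_natDegree⟩
  refine expDecayAtTop_of_apply_prod_mul_T p.roots
    (fun α hα h₁ => hp α h₁ ((Polynomial.mem_roots hp₀).mp hα)) φ hφ ?_
  convert h.const_smul c⁻¹ using 2 with k
  conv_rhs => rw [← hfac]
  rw [Polynomial.toLaurent_C_mul_eq, mul_assoc, ← smul_eq_C_mul, map_smul, inv_smul_smul₀ hc]

lemma expDecayAtTop_of_apply_mul_T {E : Type*} [SeminormedAddCommGroup E] [NormedSpace ℂ E]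
    {Q : ℂ[T;T⁻¹]} (hQ : ∀ z : ℂ, ‖z‖ = 1 → leval Q z ≠ 0) (φ : ℂ[T;T⁻¹] →ₗ[ℂ] E)
    (hφ : ∃ M, ∀ n, ‖φ (T n)‖ ≤ M) (h : ExpDecayAtTop fun k => φ (Q * T k)) :
    ExpDecayAtTop fun k => φ (T k) := by
  obtain ⟨n, p, hp⟩ := exists_T_pow Q
  refine expDecayAtTop_of_apply_toLaurent_mul_T (p := p) (fun z hz => ?_) φ hφ ?_
  · have hz₀ : z ≠ 0 := norm_ne_zero_iff.mp (by rw [hz]; exact one_ne_zero)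
    rw [← leval_toLaurent, hp, leval_mul_T _ _ hz₀]
    exact mul_ne_zero (hQ z hz) (zpow_ne_zero _ hz₀)
  · simpa [hp, mul_T_assoc, add_comm] using h.comp_add_right n

lemma coeff_rho (P : ℂ[T;T⁻¹]) (j : ℤ) : (rho P).coeff j = conj (P.coeff (-j)) := by
  simp [rho, Finsupp.equivMapDomain_apply, Finsupp.mapRange_apply]

lemma rho_T_add_C (N : ℤ) (t : ℂ) : rho (T N + C t) = T (-N) + C (conj t) := by
  ext j
  simp only [coeff_rho, AddMonoidAlgebra.coeff_add, Finsupp.add_apply, T_apply, C_apply, map_add,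
    neg_eq_iff_eq_neg]
  split_ifs <;> simp_all

lemma apply_mul_rho_T_add_C (tr : ℂ[T;T⁻¹] →ₗ[ℂ] ℂ) (h1 : tr 1 = 1) (N : ℤ) (t : ℂ) :
    tr ((T N + C t) * rho (T N + C t))
      = 1 + t * conj t + conj t * tr (T N) + t * tr (T (-N)) := by
  have : (T N + C t) * rho (T N + C t) = (1 + t * conj t) • 1 + conj t • T N + t • T (-N) := by
    simp only [rho_T_add_C, smul_eq_C_mul, mul_one, map_add, map_one, map_mul]
    rw [← T_zero, ← add_neg_cancel N, T_add]
    ring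
  simp only [this, map_add, map_smul, h1, smul_eq_mul, mul_one]

lemma norm_apply_T_le_two (tr : ℂ[T;T⁻¹] →ₗ[ℂ] ℂ) (h1 : tr 1 = 1)
    (hpos : ∀ R : ℂ[T;T⁻¹], R ≠ 0 → 0 < tr (R * rho R)) (N : ℤ) : ‖tr (T N)‖ ≤ 2 := by
  rcases eq_or_ne N 0 with rfl | hN
  · rw [T_zero, h1, norm_one]; norm_num
  have key (t : ℂ) : 0 < 1 + t * conj t + conj t * tr (T N) + t * tr (T (-N)) := by
    rw [← apply_mul_rho_T_add_C tr h1]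
    refine hpos _ fun h₀ => ?_
    simpa [T_apply, C_apply, hN] using congrArg (fun R => R.coeff N) h₀
  obtain ⟨r₁, i₁⟩ := Complex.lt_def.mp (key 1)
  obtain ⟨r₂, i₂⟩ := Complex.lt_def.mp (key (-1))
  obtain ⟨r₃, i₃⟩ := Complex.lt_def.mp (key Complex.I)
  obtain ⟨r₄, i₄⟩ := Complex.lt_def.mp (key (-Complex.I))
  simp only [Complex.zero_re, map_one, mul_one, one_mul, Complex.add_re, Complex.one_re,
    Complex.zero_im, Complex.add_im, Complex.one_im, add_zero, zero_add, map_neg, mul_neg, neg_neg,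
    neg_mul, Complex.neg_re, lt_add_neg_iff_add_lt, Complex.neg_im, Complex.conj_I,
    Complex.I_mul_I, Complex.mul_re, Complex.I_re, zero_mul, Complex.I_im, zero_sub,
    Complex.mul_im] at r₁ i₁ r₂ i₂ r₃ i₃ r₄ i₄
  have hre : |(tr (T N)).re| ≤ 1 := abs_le.mpr ⟨by linarith, by linarith⟩
  have him : |(tr (T N)).im| ≤ 1 := abs_le.mpr ⟨by linarith, by linarith⟩
  linarith [Complex.norm_le_abs_re_add_abs_im (tr (T N))]

section Relation

variable {tr : ℂ[T;T⁻¹] →ₗ[ℂ] ℂ} {s : ℂ} {l : ℤ} {P : ℂ[T;T⁻¹]}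

lemma apply_lscale_inv_mul_T_add (hs : s ≠ 0)
    (htr : ∀ R, tr (lscale s (P * R)) = tr (T l * lscale s⁻¹ (P * R))) (k : ℤ) :
    tr (lscale s⁻¹ P * T (k + l)) = (s ^ 2) ^ k * tr (lscale s P * T k) := by
  have h := htr (T k)
  rw [lscale_mul_T hs, lscale_mul_T (inv_ne_zero hs), ← smul_eq_C_mul, ← smul_eq_C_mul,
    mul_smul_comm, map_smul, map_smul, smul_eq_mul, smul_eq_mul] at h
  have hk : s⁻¹ ^ k * s ^ k = 1 := by rw [inv_zpow, inv_mul_cancel₀ (zpow_ne_zero k hs)]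
  calc tr (lscale s⁻¹ P * T (k + l))
      = s ^ k * (s⁻¹ ^ k * tr (T l * (lscale s⁻¹ P * T k))) := by
        rw [← mul_assoc, mul_comm (s ^ k), hk, one_mul, T_add]
        congr 1; ring
    _ = (s ^ 2) ^ k * tr (lscale s P * T k) := by rw [← h, ← mul_assoc, ← mul_zpow, sq]

lemma apply_lscale_mul_T_neg (hs : s ≠ 0)
    (htr : ∀ R, tr (lscale s (P * R)) = tr (T l * lscale s⁻¹ (P * R))) (k : ℤ) :
    tr (lscale s P * T (-k)) = (s ^ 2) ^ k * tr (lscale s⁻¹ P * T (-k + l)) := by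
  rw [apply_lscale_inv_mul_T_add hs htr, ← mul_assoc, zpow_neg,
    mul_inv_cancel₀ (zpow_ne_zero k (pow_ne_zero 2 hs)), one_mul]

end Relation

section Sides

variable {q : ℝ} {l : ℤ} {P : ℂ[T;T⁻¹]} {tr : ℂ[T;T⁻¹] →ₗ[ℂ] ℂ}

lemma norm_ofReal_sq_lt_one (hq₀ : 0 ≤ q) (hq₁ : q < 1) : ‖(q : ℂ) ^ 2‖ < 1 := by
  rw [norm_pow, Complex.norm_of_nonneg hq₀]; nlinarith

lemma expDecayAtTop_apply_T (hq₀ : 0 < q) (hq₁ : q < 1)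
    (hroots : ∀ z : ℂ, leval P z = 0 → ‖z‖ ≠ q⁻¹) (hbdd : ∃ M, ∀ n, ‖tr (T n)‖ ≤ M)
    (htr : ∀ R, tr (lscale (q : ℂ) (P * R)) = tr (T l * lscale ((q : ℂ)⁻¹) (P * R))) :
    ExpDecayAtTop fun k => tr (T k) := by
  have hq : (q : ℂ) ≠ 0 := by exact_mod_cast hq₀.ne'
  have h := expDecayAtTop_of_apply_mul_T (Q := lscale (q : ℂ)⁻¹ P) (fun z hz h₀ => ?_)
    (tr ∘ₗ .mulLeft ℂ (T l)) (tr.exists_bound_apply_mul_T hbdd (T l)) ?_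
  · convert h.comp_add_right (-l) using 2 with k
    rw [LinearMap.comp_apply, LinearMap.mulLeft_apply, ← T_add, add_neg_cancel_comm_assoc]
  · rw [leval_lscale] at h₀
    apply hroots _ h₀
    rw [norm_mul, hz, mul_one, norm_inv, Complex.norm_of_nonneg hq₀.le]
  · have hg := tr.exists_bound_apply_mul_T hbdd (lscale (q : ℂ) P)
    convert expDecayAtTop_zpow_smul (pow_ne_zero 2 hq) (norm_ofReal_sq_lt_one hq₀.le hq₁) hg
      using 2 with k
    rw [LinearMap.comp_apply, LinearMap.mulLeft_apply, smul_eq_mul,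
      ← apply_lscale_inv_mul_T_add hq htr, T_add]
    congr 1; ring

lemma expDecayAtTop_apply_T_neg (hq₀ : 0 < q) (hq₁ : q < 1)
    (hroots : ∀ z : ℂ, leval P z = 0 → ‖z‖ ≠ q) (hbdd : ∃ M, ∀ n, ‖tr (T n)‖ ≤ M)
    (htr : ∀ R, tr (lscale (q : ℂ) (P * R)) = tr (T l * lscale ((q : ℂ)⁻¹) (P * R))) :
    ExpDecayAtTop fun k => tr (T (-k)) := by
  have hq : (q : ℂ) ≠ 0 := by exact_mod_cast hq₀.ne'
  obtain ⟨M, hM⟩ := hbdd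
  have h := expDecayAtTop_of_apply_mul_T (Q := invert (lscale (q : ℂ) P)) (fun z hz h₀ => ?_)
    (tr ∘ₗ invert.toLinearMap) ⟨M, fun n => by simpa using hM (-n)⟩ ?_
  · simpa using h
  · rw [leval_invert, leval_lscale] at h₀
    apply hroots _ h₀
    rw [norm_mul, norm_inv, hz, inv_one, mul_one, Complex.norm_of_nonneg hq₀.le]
  · obtain ⟨M', hM'⟩ := tr.exists_bound_apply_mul_T ⟨M, hM⟩ (lscale (q : ℂ)⁻¹ P)
    convert expDecayAtTop_zpow_smul (pow_ne_zero 2 hq) (norm_ofReal_sq_lt_one hq₀.le hq₁)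
      ⟨M', fun k => hM' (-k + l)⟩ using 2 with k
    rw [LinearMap.comp_apply, AlgEquiv.toLinearMap_apply, map_mul, involutive_invert, invert_T,
      apply_lscale_mul_T_neg hq htr, smul_eq_mul]

theorem trace_coefficients_exponential_decay_general (q : ℝ) (hq0 : 0 < q) (hq1 : q < 1)
    (l : ℤ) (P : LaurentPolynomial ℂ)
    (hroots : ∀ z : ℂ, leval P z = 0 →
      ‖z‖ ≠ q ∧ ‖z‖ ≠ q⁻¹)
    (tr : LaurentPolynomial ℂ →ₗ[ℂ] ℂ)
    (h1 : tr 1 = 1)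
    (hpos : ∀ R : LaurentPolynomial ℂ, R ≠ 0 → 0 < tr (R * rho R))
    (htr : ∀ R : LaurentPolynomial ℂ,
      tr (lscale (q : ℂ) (P * R)) = tr (T l * lscale ((q : ℂ)⁻¹) (P * R))) :
    ∃ C : ℝ, 0 < C ∧ ∃ κ : ℝ, 0 < κ ∧ κ < 1 ∧
      ∀ N : ℤ, ‖tr (T N)‖ ≤ C * κ ^ N.natAbs := by
  have hbdd : ∃ M, ∀ n, ‖tr (T n)‖ ≤ M := ⟨2, norm_apply_T_le_two tr h1 hpos⟩
  exact ExpDecayAtTop.exists_norm_le_mul_pow_natAbs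
    (expDecayAtTop_apply_T hq0 hq1 (fun z hz => (hroots z hz).2) hbdd htr)
    (expDecayAtTop_apply_T_neg hq0 hq1 (fun z hz => (hroots z hz).1) hbdd htr)

/-- let `0 < q < 1`, `l ∈ ℤ`, and `P` a nonzero Laurent polynomial
with no roots of absolute value `q` or `q⁻¹`. Let `tr : ℂ[z,z⁻¹] → ℂ` be linear
with `tr 1 = 1`, `tr(R·ρ(R)) > 0` for all nonzero `R`, and
`tr(P(qz)R(qz)) = tr(z^l P(q⁻¹z)R(q⁻¹z))` for all `R`. Then the coefficients
`tr(z^N)` decay exponentially: `|tr(z^N)| ≤ C·κ^{|N|}` for some `C > 0`,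
`0 < κ < 1`. -/
theorem trace_coefficients_exponential_decay (q : ℝ) (hq0 : 0 < q) (hq1 : q < 1)
    (l : ℤ) (P : LaurentPolynomial ℂ) (hP : P ≠ 0)
    (hroots : ∀ z : ℂ, leval P z = 0 →
      ‖z‖ ≠ q ∧ ‖z‖ ≠ q⁻¹)
    (tr : LaurentPolynomial ℂ →ₗ[ℂ] ℂ)
    (h1 : tr 1 = 1)
    (hpos : ∀ R : LaurentPolynomial ℂ, R ≠ 0 → 0 < tr (R * rho R))
    (htr : ∀ R : LaurentPolynomial ℂ,
      tr (lscale (q : ℂ) (P * R)) = tr (T l * lscale ((q : ℂ)⁻¹) (P * R))) :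
    ∃ C : ℝ, 0 < C ∧ ∃ κ : ℝ, 0 < κ ∧ κ < 1 ∧
      ∀ N : ℤ, ‖tr (T N)‖ ≤ C * κ ^ N.natAbs :=
  trace_coefficients_exponential_decay_general q hq0 hq1 l P hroots tr h1 hpos htr
end Sides
end

section
/- Let 0 < q < 1, let θ be as defined below, let α_1, …, α_N and β_1, …, β_M be nonzero complex numbers, let c be a nonzero complex number, let m be an integer, and define w(z) = c·∏_{i=1}^N θ(z/α_i) / ∏_{j=1}^M θ(z/β_j). Suppose that w(q^{−1}z) = q^m z^m w(qz) holds for every z ∈ ℂ ∖ {0} at which both sides are defined. Then N = M + m and (−1)^{N−M}·∏_{i=1}^N α_i / ∏_{j=1}^M β_j = q^{−2m}. -/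
/-!
Splitting off the first factor of each infinite product shows that `θ(q⁻²u) = -q⁻²u θ(u)`, so
`w(q⁻¹z) = (-q⁻¹z)^(N-M) (∏ βⱼ / ∏ αᵢ) w(qz)`. The zeros of `θ` lie in `q^(2ℤ)`, hence `w(qt) ≠ 0`
for all but countably many reals `t > 0`; at those `t` the assumed relation becomes
`(-q⁻¹)^(N-M) (∏ βⱼ / ∏ αᵢ) t^(N-M) = q^m t^m`. Holding at two distinct `t`, it forces
`N - M = m` and then `(-q⁻¹)^m ∏ βⱼ / ∏ αᵢ = q^m`.
-/

/-- The rescaled Jacobi theta function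
`θ(z) = (1 - z) ∏_{n=1}^∞ (1 - q^{2n} z)(1 - q^{2n} z⁻¹)`. -/
noncomputable def theta (q : ℝ) (z : ℂ) : ℂ :=
  (1 - z) * ∏' n : ℕ,
    ((1 - (q : ℂ) ^ (2 * (n + 1)) * z) * (1 - (q : ℂ) ^ (2 * (n + 1)) * z⁻¹))

open Complex Set

noncomputable def thetaQuotient {ι κ : Type*} [Fintype ι] [Fintype κ] (q : ℝ) (c : ℂ)
    (α : ι → ℂ) (β : κ → ℂ) (z : ℂ) : ℂ :=
  c * (∏ i, theta q (z / α i)) / ∏ j, theta q (z / β j)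

section Theta

variable {q : ℝ}

theorem summable_norm_pow_mul (hq : |q| < 1) (x : ℂ) :
    Summable fun n : ℕ => ‖(q : ℂ) ^ (2 * (n + 1)) * x‖ := by
  simp only [norm_mul, norm_pow, norm_real, Real.norm_eq_abs, pow_mul]
  refine Summable.mul_right _ ((summable_nat_add_iff 1).2 (summable_geometric_of_lt_one
    (sq_nonneg _) ?_))
  nlinarith [abs_nonneg q]

theorem multipliable_one_sub_pow_mul (hq : |q| < 1) (x : ℂ) :
    Multipliable fun n : ℕ => 1 - (q : ℂ) ^ (2 * (n + 1)) * x := by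
  simpa only [sub_eq_add_neg] using
    multipliable_one_add_of_summable (by simpa only [norm_neg] using summable_norm_pow_mul hq x)

theorem tprod_one_sub_pow_mul_ne_zero (hq : |q| < 1) {x : ℂ}
    (hx : ∀ n : ℕ, 1 - (q : ℂ) ^ (2 * (n + 1)) * x ≠ 0) :
    ∏' n : ℕ, (1 - (q : ℂ) ^ (2 * (n + 1)) * x) ≠ 0 := by
  simp only [sub_eq_add_neg] at hx ⊢
  exact tprod_one_add_ne_zero_of_summable hx
    (by simpa only [norm_neg] using summable_norm_pow_mul hq x)

theorem tprod_one_sub_pow_mul_eq_mul (hq : |q| < 1) (x : ℂ) :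
    ∏' n : ℕ, (1 - (q : ℂ) ^ (2 * (n + 1)) * x) =
      (1 - (q : ℂ) ^ 2 * x) * ∏' n : ℕ, (1 - (q : ℂ) ^ (2 * (n + 1)) * ((q : ℂ) ^ 2 * x)) := by
  have shift : (fun n : ℕ => 1 - (q : ℂ) ^ (2 * (n + 1 + 1)) * x) =
      fun n : ℕ => 1 - (q : ℂ) ^ (2 * (n + 1)) * ((q : ℂ) ^ 2 * x) := by
    funext n
    ring
  rw [tprod_eq_zero_mul' (by rw [shift]; exact multipliable_one_sub_pow_mul hq _), shift]

theorem theta_eq_mul_tprod_mul_tprod (hq : |q| < 1) (z : ℂ) :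
    theta q z = (1 - z) * ((∏' n : ℕ, (1 - (q : ℂ) ^ (2 * (n + 1)) * z)) *
      ∏' n : ℕ, (1 - (q : ℂ) ^ (2 * (n + 1)) * z⁻¹)) := by
  rw [theta, (multipliable_one_sub_pow_mul hq z).tprod_mul (multipliable_one_sub_pow_mul hq z⁻¹)]

theorem theta_inv_sq_mul (hq0 : q ≠ 0) (hq : |q| < 1) {u : ℂ} (hu : u ≠ 0) :
    theta q (((q : ℂ) ^ 2)⁻¹ * u) = -(((q : ℂ) ^ 2)⁻¹ * u) * theta q u := by
  have hQ : (q : ℂ) ≠ 0 := ofReal_ne_zero.2 hq0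
  rw [theta_eq_mul_tprod_mul_tprod hq, theta_eq_mul_tprod_mul_tprod hq, mul_inv, inv_inv,
    tprod_one_sub_pow_mul_eq_mul hq (((q : ℂ) ^ 2)⁻¹ * u),
    mul_inv_cancel_left₀ (pow_ne_zero 2 hQ), tprod_one_sub_pow_mul_eq_mul hq u⁻¹,
    show 1 - ((q : ℂ) ^ 2)⁻¹ * u = -(((q : ℂ) ^ 2)⁻¹ * u) * (1 - (q : ℂ) ^ 2 * u⁻¹) by
      field_simp; ring]
  ring

theorem exists_zpow_eq_of_theta_eq_zero (hq : |q| < 1) {x : ℂ} (hx : theta q x = 0) :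
    ∃ k : ℤ, (q : ℂ) ^ (2 * k) = x := by
  rw [theta_eq_mul_tprod_mul_tprod hq] at hx
  rcases mul_eq_zero.1 hx with h | h
  · exact ⟨0, by simpa using sub_eq_zero.1 h⟩
  rcases mul_eq_zero.1 h with h | h
  · obtain ⟨n, hn⟩ := not_forall_not.1 (mt (tprod_one_sub_pow_mul_ne_zero hq) (not_not.2 h))
    refine ⟨-(n + 1), ?_⟩
    rw [show 2 * -((n : ℤ) + 1) = -((2 * (n + 1) : ℕ) : ℤ) by push_cast; ring, zpow_neg,
      zpow_natCast]
    exact inv_eq_of_mul_eq_one_right (sub_eq_zero.1 hn).symm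
  · obtain ⟨n, hn⟩ := not_forall_not.1 (mt (tprod_one_sub_pow_mul_ne_zero hq) (not_not.2 h))
    refine ⟨n + 1, ?_⟩
    rw [show 2 * ((n : ℤ) + 1) = ((2 * (n + 1) : ℕ) : ℤ) by push_cast; ring, zpow_natCast,
      eq_inv_of_mul_eq_one_left (sub_eq_zero.1 hn).symm, inv_inv]

theorem countable_setOf_theta_eq_zero (hq : |q| < 1) : {x | theta q x = 0}.Countable :=
  (countable_range fun k : ℤ => (q : ℂ) ^ (2 * k)).mono
    fun _ hx => exists_zpow_eq_of_theta_eq_zero hq hx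

theorem countable_setOf_exists_theta_mul_div_eq_zero {ι : Type*} [Finite ι] (hq0 : q ≠ 0)
    (hq : |q| < 1) {γ : ι → ℂ} (hγ : ∀ i, γ i ≠ 0) :
    {t : ℝ | ∃ i, theta q (q * t / γ i) = 0}.Countable := by
  rw [ofPred_exists]
  exact countable_iUnion fun i => (countable_setOf_theta_eq_zero hq).preimage
    fun t₁ t₂ h => by simpa [hq0, hγ i] using h

theorem theta_inv_mul_div (hq0 : q ≠ 0) (hq : |q| < 1) {z γ : ℂ} (hz : z ≠ 0) (hγ : γ ≠ 0) :
    theta q ((q : ℂ)⁻¹ * z / γ) = -((q : ℂ)⁻¹ * z / γ) * theta q (q * z / γ) := by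
  have hQ : (q : ℂ) ≠ 0 := ofReal_ne_zero.2 hq0
  have h := theta_inv_sq_mul hq0 hq (div_ne_zero (mul_ne_zero hQ hz) hγ)
  rwa [show ((q : ℂ) ^ 2)⁻¹ * (q * z / γ) = (q : ℂ)⁻¹ * z / γ by field_simp] at h

theorem theta_inv_mul_div_ne_zero (hq0 : q ≠ 0) (hq : |q| < 1) {z γ : ℂ} (hz : z ≠ 0)
    (hγ : γ ≠ 0) (h : theta q (q * z / γ) ≠ 0) : theta q ((q : ℂ)⁻¹ * z / γ) ≠ 0 := by
  rw [theta_inv_mul_div hq0 hq hz hγ]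
  exact mul_ne_zero (neg_ne_zero.2 (div_ne_zero (mul_ne_zero (by simpa) hz) hγ)) h

theorem prod_theta_inv_mul_div {ι : Type*} [Fintype ι] (hq0 : q ≠ 0) (hq : |q| < 1) {z : ℂ}
    (hz : z ≠ 0) {γ : ι → ℂ} (hγ : ∀ i, γ i ≠ 0) :
    ∏ i, theta q ((q : ℂ)⁻¹ * z / γ i) =
      (-((q : ℂ)⁻¹ * z)) ^ Fintype.card ι / (∏ i, γ i) * ∏ i, theta q (q * z / γ i) := by
  simp only [theta_inv_mul_div hq0 hq hz (hγ _), Finset.prod_mul_distrib, neg_div',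
    Finset.prod_div_distrib, Finset.prod_const, Finset.card_univ]

end Theta

section ThetaQuotient

variable {ι κ : Type*} [Fintype ι] [Fintype κ] {q : ℝ} {c : ℂ} {α : ι → ℂ} {β : κ → ℂ}

theorem thetaQuotient_inv_mul (hq0 : q ≠ 0) (hq : |q| < 1) (hα : ∀ i, α i ≠ 0)
    (hβ : ∀ j, β j ≠ 0) {z : ℂ} (hz : z ≠ 0) :
    thetaQuotient q c α β ((q : ℂ)⁻¹ * z) =
      (-((q : ℂ)⁻¹ * z)) ^ ((Fintype.card ι : ℤ) - Fintype.card κ) * ((∏ j, β j) / ∏ i, α i) *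
        thetaQuotient q c α β (q * z) := by
  have hX : -((q : ℂ)⁻¹ * z) ≠ 0 :=
    neg_ne_zero.2 (mul_ne_zero (inv_ne_zero (ofReal_ne_zero.2 hq0)) hz)
  simp only [thetaQuotient]
  rw [prod_theta_inv_mul_div hq0 hq hz hα, prod_theta_inv_mul_div hq0 hq hz hβ,
    zpow_sub₀ hX, zpow_natCast, zpow_natCast]
  simp only [div_eq_mul_inv, mul_inv, inv_inv]
  ring

theorem thetaQuotient_ne_zero (hc : c ≠ 0) {z : ℂ} (hα : ∀ i, theta q (z / α i) ≠ 0)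
    (hβ : ∀ j, theta q (z / β j) ≠ 0) : thetaQuotient q c α β z ≠ 0 :=
  div_ne_zero (mul_ne_zero hc (Finset.prod_ne_zero_iff.2 fun i _ => hα i))
    (Finset.prod_ne_zero_iff.2 fun j _ => hβ j)

end ThetaQuotient

theorem int_eq_of_mul_zpow_eq_mul_zpow {a b : ℂ} (hb : b ≠ 0) {k l : ℤ} {t₁ t₂ : ℝ}
    (ht₁ : 0 < t₁) (ht₂ : 0 < t₂) (hne : t₁ ≠ t₂) (h₁ : a * (t₁ : ℂ) ^ k = b * (t₁ : ℂ) ^ l)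
    (h₂ : a * (t₂ : ℂ) ^ k = b * (t₂ : ℂ) ^ l) : k = l := by
  have ha : a ≠ 0 := by
    rintro rfl
    exact mul_ne_zero hb (zpow_ne_zero l (ofReal_ne_zero.2 ht₁.ne')) (by simpa using h₁.symm)
  have hpow (t : ℝ) (ht : 0 < t) (h : a * (t : ℂ) ^ k = b * (t : ℂ) ^ l) :
      ((t ^ (k - l) : ℝ) : ℂ) = b / a := by
    rw [ofReal_zpow, zpow_sub₀ (ofReal_ne_zero.2 ht.ne'), eq_div_iff ha, div_mul_eq_mul_div,
      div_eq_iff (zpow_ne_zero l (ofReal_ne_zero.2 ht.ne')), mul_comm, h]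
  by_contra hkl
  exact hne (zpow_left_injOn₀ (sub_ne_zero.2 hkl) ht₁.le ht₂.le
    (ofReal_injective ((hpow t₁ ht₁ h₁).trans (hpow t₂ ht₂ h₂).symm)))

theorem eq_and_eq_of_mul_zpow_eq_mul_zpow_off_countable {a b : ℂ} (hb : b ≠ 0) {k l : ℤ}
    {S : Set ℝ} (hS : S.Countable)
    (h : ∀ t : ℝ, 0 < t → t ∉ S → a * (t : ℂ) ^ k = b * (t : ℂ) ^ l) : k = l ∧ a = b := by
  obtain ⟨t₁, ht₁S, ht₁⟩ := (hS.dense_compl ℝ).exists_between (zero_lt_one' ℝ)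
  obtain ⟨t₂, ht₂S, ht₂⟩ := (hS.dense_compl ℝ).exists_between one_lt_two
  have h₁ := h t₁ ht₁.1 ht₁S
  have hkl : k = l := int_eq_of_mul_zpow_eq_mul_zpow hb ht₁.1 (by linarith [ht₂.1])
    (by linarith [ht₁.2, ht₂.1]) h₁ (h t₂ (by linarith [ht₂.1]) ht₂S)
  subst hkl
  exact ⟨rfl, mul_right_cancel₀ (zpow_ne_zero k (ofReal_ne_zero.2 ht₁.1.ne')) h₁⟩

theorem neg_one_zpow_mul_div_eq_zpow {Q A B : ℂ} (hQ : Q ≠ 0) {m : ℤ}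
    (h : (-Q⁻¹) ^ m * (B / A) = Q ^ m) : (-1) ^ m * (A / B) = Q ^ (-2 * m) := by
  have hQm : Q ^ m ≠ 0 := zpow_ne_zero m hQ
  have hA : A ≠ 0 := by
    rintro rfl
    exact hQm (by simpa using h.symm)
  have hB : B ≠ 0 := by
    rintro rfl
    exact hQm (by simpa using h.symm)
  have hsq : ((-1 : ℂ) ^ m) ^ 2 = 1 := by
    rw [← zpow_natCast, ← zpow_mul, mul_comm, zpow_mul]
    norm_num
  rw [neg_eq_neg_one_mul, mul_zpow, inv_zpow] at h
  rw [show -2 * m = -m + -m by ring, zpow_add₀ hQ, zpow_neg]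
  field_simp at h ⊢
  linear_combination (-(-1) ^ m) * h + B * hsq

/-- let `0 < q < 1`, let `α_1, …, α_N`, `β_1, …, β_M` be nonzero,
`c ≠ 0`, `m ∈ ℤ`, and `w(z) = c ∏ᵢ θ(z/αᵢ) / ∏ⱼ θ(z/βⱼ)`. If
`w(q⁻¹z) = q^m z^m w(qz)` holds at every `z ≠ 0` where both sides are defined
(i.e. where the denominators do not vanish), then `N = M + m` and
`(-1)^{N-M} ∏ᵢ αᵢ / ∏ⱼ βⱼ = q^{-2m}`. -/
theorem theta_quotient_functional_equation_constraints (q : ℝ)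
    (hq0 : 0 < q) (hq1 : q < 1)
    (N M : ℕ) (α : Fin N → ℂ) (β : Fin M → ℂ)
    (hα : ∀ i, α i ≠ 0) (hβ : ∀ j, β j ≠ 0)
    (c : ℂ) (hc : c ≠ 0) (m : ℤ)
    (w : ℂ → ℂ)
    (hw : ∀ z : ℂ, w z =
      c * (∏ i, theta q (z / α i)) / ∏ j, theta q (z / β j))
    (heq : ∀ z : ℂ, z ≠ 0 →
      (∀ j, theta q ((q : ℂ)⁻¹ * z / β j) ≠ 0) →
      (∀ j, theta q ((q : ℂ) * z / β j) ≠ 0) →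
      w ((q : ℂ)⁻¹ * z) = (q : ℂ) ^ m * z ^ m * w ((q : ℂ) * z)) :
    (N : ℤ) = (M : ℤ) + m ∧
    (-1 : ℂ) ^ ((N : ℤ) - (M : ℤ)) * ((∏ i, α i) / ∏ j, β j)
      = (q : ℂ) ^ (-2 * m) := by
  have hq : |q| < 1 := abs_lt.2 ⟨by linarith, hq1⟩
  have hQ : (q : ℂ) ≠ 0 := ofReal_ne_zero.2 hq0.ne'
  obtain rfl : w = thetaQuotient q c α β := funext hw
  have hS := (countable_setOf_exists_theta_mul_div_eq_zero hq0.ne' hq hα).union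
    (countable_setOf_exists_theta_mul_div_eq_zero hq0.ne' hq hβ)
  obtain ⟨hNM, hcoeff⟩ := eq_and_eq_of_mul_zpow_eq_mul_zpow_off_countable (zpow_ne_zero m hQ) hS
    (a := (-(q : ℂ)⁻¹) ^ ((N : ℤ) - M) * ((∏ j, β j) / ∏ i, α i)) (k := N - M) (l := m)
    fun t ht htS => by
      simp only [mem_union, mem_ofPred_eq, not_or, not_exists] at htS
      have hz : (t : ℂ) ≠ 0 := ofReal_ne_zero.2 ht.ne'
      have h := heq t hz (fun j => theta_inv_mul_div_ne_zero hq0.ne' hq hz (hβ j) (htS.2 j)) htS.2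
      rw [thetaQuotient_inv_mul hq0.ne' hq hα hβ hz, Fintype.card_fin, Fintype.card_fin,
        ← neg_mul, mul_zpow] at h
      linear_combination mul_right_cancel₀ (thetaQuotient_ne_zero hc htS.1 htS.2) h
  rw [hNM] at hcoeff ⊢
  exact ⟨by omega, neg_one_zpow_mul_div_eq_zpow hQ hcoeff⟩
end
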